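/- arXiv:1903.03003 — 7 statements merged into one kernel-verified Lean document; each statement's English description precedes it below -/
import Mathlib

section
/- Suppose x consists of k runs each of length m' and y consists of ℓ runs each of length n' with n' ≤ m'. Then the number of distinct block-diagonal offsets, |{j·n' − i·m' : i ∈ [k], j ∈ [ℓ]} ∪ {0}|, is at most α·ℓ + β·k + 1, where M = lcm(m',n'), α = M/m', β = M/n'. -/
open Finset

private lemma offsets_aux (a b m' n' : ℕ) (ha : 1 ≤ a) (hb : 1 ≤ b)
    (heq : a * m' = b * n') :
    ∀ i j : ℕ, 1 ≤ i → 1 ≤ j → ∃ i' j' : ℕ, 1 ≤ i' ∧ i' ≤ i ∧ 1 ≤ j' ∧ j' ≤ j ∧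
      (i' ≤ a ∨ j' ≤ b) ∧ (j' * n' : ℤ) - i' * m' = (j * n' : ℤ) - i * m' := by
  intro i
  induction i using Nat.strong_induction_on with
  | _ i ih =>
    intro j hi hj
    by_cases hia : i ≤ a
    · exact ⟨i, j, hi, le_refl _, hj, le_refl _, Or.inl hia, rfl⟩
    by_cases hjb : j ≤ b
    · exact ⟨i, j, hi, le_refl _, hj, le_refl _, Or.inr hjb, rfl⟩
    push_neg at hia hjb
    have hi' : 1 ≤ i - a := by omega
    have hj' : 1 ≤ j - b := by omega
    obtain ⟨i', j', h1, h2, h3, h4, h5, h6⟩ := ih (i - a) (by omega) (j - b) hi' hj'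
    refine ⟨i', j', h1, by omega, h3, by omega, h5, ?_⟩
    rw [h6]
    have hca : ((i - a : ℕ) : ℤ) = (i : ℤ) - a := by omega
    have hcb : ((j - b : ℕ) : ℤ) = (j : ℤ) - b := by omega
    have heqz : (a : ℤ) * m' = (b : ℤ) * n' := by exact_mod_cast heq
    rw [hca, hcb]
    ring_nf
    ring_nf at heqz
    omega

/-- If `x` consists of `k` runs of length `m'` and `y` of `ℓ` runs of length
`n' ≤ m'`, then the number of distinct block-diagonal offsets
`{j·n' − i·m' : i ∈ [k], j ∈ [ℓ]} ∪ {0}` is at most `α·ℓ + β·k + 1`, where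
`M = lcm(m',n')`, `α = M/m'`, `β = M/n'`. -/
theorem card_offsets_equal_runs_le (m' n' k l : ℕ)
    (hn' : 1 ≤ n') (hle : n' ≤ m') (hk : 1 ≤ k) (hl : 1 ≤ l) :
    (((Icc 1 k ×ˢ Icc 1 l).image
        (fun ij => (ij.2 * n' : ℤ) - (ij.1 * m' : ℤ))) ∪ {0}).card
      ≤ (Nat.lcm m' n' / m') * l + (Nat.lcm m' n' / n') * k + 1 := by
  set a := Nat.lcm m' n' / m' with hadef
  set b := Nat.lcm m' n' / n' with hbdef
  have hm' : 1 ≤ m' := le_trans hn' hle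
  have ham : a * m' = Nat.lcm m' n' := Nat.div_mul_cancel (Nat.dvd_lcm_left _ _)
  have hbn : b * n' = Nat.lcm m' n' := Nat.div_mul_cancel (Nat.dvd_lcm_right _ _)
  have hlcm : 1 ≤ Nat.lcm m' n' := Nat.lcm_pos hm' hn'
  have ha : 1 ≤ a := by
    rcases Nat.eq_zero_or_pos a with h | h
    · rw [h] at ham; simp at ham; omega
    · exact h
  have hb : 1 ≤ b := by
    rcases Nat.eq_zero_or_pos b with h | h
    · rw [h] at hbn; simp at hbn; omega
    · exact h
  have hsub : ((Icc 1 k ×ˢ Icc 1 l).image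
        (fun ij => (ij.2 * n' : ℤ) - (ij.1 * m' : ℤ)))
      ⊆ (((Icc 1 a ×ˢ Icc 1 l) ∪ (Icc 1 k ×ˢ Icc 1 b)).image
        (fun ij => (ij.2 * n' : ℤ) - (ij.1 * m' : ℤ))) := by
    intro x hx
    simp only [mem_image, mem_product, mem_Icc, mem_union] at hx ⊢
    obtain ⟨⟨i, j⟩, ⟨⟨hi1, hik⟩, hj1, hjl⟩, hval⟩ := hx
    obtain ⟨i', j', h1, h2, h3, h4, h5, h6⟩ :=
      offsets_aux a b m' n' ha hb (ham.trans hbn.symm) i j hi1 hj1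
    refine ⟨(i', j'), ?_, h6.trans hval⟩
    rcases h5 with h | h
    · exact Or.inl ⟨⟨h1, h⟩, h3, le_trans h4 hjl⟩
    · exact Or.inr ⟨⟨h1, le_trans h2 hik⟩, h3, h⟩
  calc (((Icc 1 k ×ˢ Icc 1 l).image
        (fun ij => (ij.2 * n' : ℤ) - (ij.1 * m' : ℤ))) ∪ {0}).card
      ≤ ((Icc 1 k ×ˢ Icc 1 l).image
        (fun ij => (ij.2 * n' : ℤ) - (ij.1 * m' : ℤ))).card + ({0} : Finset ℤ).card :=
        card_union_le _ _
    _ ≤ (((Icc 1 a ×ˢ Icc 1 l) ∪ (Icc 1 k ×ˢ Icc 1 b)).image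
        (fun ij => (ij.2 * n' : ℤ) - (ij.1 * m' : ℤ))).card + 1 := by
        simp only [card_singleton]
        exact Nat.add_le_add_right (card_le_card hsub) 1
    _ ≤ ((Icc 1 a ×ˢ Icc 1 l) ∪ (Icc 1 k ×ˢ Icc 1 b)).card + 1 :=
        Nat.add_le_add_right (card_image_le) 1
    _ ≤ ((Icc 1 a ×ˢ Icc 1 l).card + (Icc 1 k ×ˢ Icc 1 b).card) + 1 :=
        Nat.add_le_add_right (card_union_le _ _) 1
    _ = a * l + b * k + 1 := by
        simp [card_product, Nat.card_Icc, Nat.mul_comm]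
end

section
/- Suppose x consists of k runs each of length m' (so x has length m = k·m') and y consists of ℓ runs each of length m' (equal run lengths, so y has length n = ℓ·m'). Let c_{i,j} = (x̃_i − ỹ_j)² where x̃_i, ỹ_j are the run values. Define the (k×ℓ) dynamic program E[1,1] = m'·c_{1,1}, E[i,1] = E[i−1,1] + m'·c_{i,1}, E[1,j] = E[1,j−1] + m'·c_{1,j}, and E[i,j] = min(E[i−1,j], E[i,j−1], E[i−1,j−1]) + m'·c_{i,j}. Then dtw(x,y)² = E[k,ℓ]. In other words, the blocked DTW heuristic with block cost max(m',m')·c_{i,j} is exact when all blocks are squares. -/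
/-- A warping path of order `m × n` with `L` index pairs `p 0, …, p (L-1)`. -/
def IsWarpingPath (m n L : ℕ) (p : ℕ → ℕ × ℕ) : Prop :=
  1 ≤ L ∧ p 0 = (1, 1) ∧ p (L - 1) = (m, n) ∧
  (∀ ℓ < L, 1 ≤ (p ℓ).1 ∧ (p ℓ).1 ≤ m ∧ 1 ≤ (p ℓ).2 ∧ (p ℓ).2 ≤ n) ∧
  ∀ ℓ, ℓ + 1 < L →
    ((p (ℓ + 1)).1 = (p ℓ).1 + 1 ∧ (p (ℓ + 1)).2 = (p ℓ).2) ∨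
    ((p (ℓ + 1)).1 = (p ℓ).1 ∧ (p (ℓ + 1)).2 = (p ℓ).2 + 1) ∨
    ((p (ℓ + 1)).1 = (p ℓ).1 + 1 ∧ (p (ℓ + 1)).2 = (p ℓ).2 + 1)

/-- The cost of a warping path with respect to time series `x` and `y`
(indexed from 1): the sum of squared differences over all aligned pairs. -/
noncomputable def pathCost (x y : ℕ → ℝ) (L : ℕ) (p : ℕ → ℕ × ℕ) : ℝ :=
  ∑ ℓ ∈ Finset.range L, (x (p ℓ).1 - y (p ℓ).2) ^ 2

/-- The squared DTW distance between the length-`m` prefix of `x` and the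
length-`n` prefix of `y`: the minimum cost over all warping paths. -/
noncomputable def dtwSq (x y : ℕ → ℝ) (m n : ℕ) : ℝ :=
  sInf {c : ℝ | ∃ L p, IsWarpingPath m n L p ∧ c = pathCost x y L p}

/-- The DTW distance. -/
noncomputable def dtw (x y : ℕ → ℝ) (m n : ℕ) : ℝ :=
  Real.sqrt (dtwSq x y m n)

/-- One admissible step of a warping path. -/
def DTWStep (P Q : ℕ × ℕ) : Prop :=
  (Q.1 = P.1 + 1 ∧ Q.2 = P.2) ∨ (Q.1 = P.1 ∧ Q.2 = P.2 + 1) ∨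
  (Q.1 = P.1 + 1 ∧ Q.2 = P.2 + 1)

/-- Extend a path ending at `(A, B)` by `m'` straight steps in direction `(da, db)`. -/
lemma extend_dtw_path (x y : ℕ → ℝ) (m' : ℕ) (hm' : 1 ≤ m') (L : ℕ) (p : ℕ → ℕ × ℕ)
    (da db A B : ℕ) (hda : da ≤ 1) (hdb : db ≤ 1) (hpos : 1 ≤ da + db)
    (hL : 1 ≤ L) (h0 : p 0 = (1, 1)) (hend : p (L - 1) = (A, B))
    (hbd : ∀ t < L, 1 ≤ (p t).1 ∧ (p t).1 ≤ A ∧ 1 ≤ (p t).2 ∧ (p t).2 ≤ B)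
    (hst : ∀ t, t + 1 < L → DTWStep (p t) (p (t + 1))) :
    ∃ q : ℕ → ℕ × ℕ, 1 ≤ L + m' ∧ q 0 = (1, 1) ∧
      q (L + m' - 1) = (A + da * m', B + db * m') ∧
      (∀ t < L + m', 1 ≤ (q t).1 ∧ (q t).1 ≤ A + da * m' ∧ 1 ≤ (q t).2 ∧ (q t).2 ≤ B + db * m') ∧
      (∀ t, t + 1 < L + m' → DTWStep (q t) (q (t + 1))) ∧
      pathCost x y (L + m') q =
        pathCost x y L p + ∑ t ∈ Finset.range m', (x (A + da * (t + 1)) - y (B + db * (t + 1))) ^ 2 := by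
  have hA1 : 1 ≤ A := by have h := hbd (L - 1) (by omega); rw [hend] at h; exact h.1
  have hB1 : 1 ≤ B := by have h := hbd (L - 1) (by omega); rw [hend] at h; exact h.2.2.1
  refine ⟨fun t => if t < L then p t else (A + da * (t + 1 - L), B + db * (t + 1 - L)),
    by omega, ?_, ?_, ?_, ?_, ?_⟩
  case _ => simp only [if_pos (show (0:ℕ) < L by omega)]; exact h0
  case _ =>
    have h1 : ¬ (L + m' - 1 < L) := by omega
    simp only [if_neg h1]
    have h2 : L + m' - 1 + 1 - L = m' := by omega
    rw [h2]
  case _ =>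
    intro t ht
    by_cases h : t < L
    · obtain ⟨a1, a2, a3, a4⟩ := hbd t h
      simp only [if_pos h]
      exact ⟨a1, le_trans a2 (Nat.le_add_right _ _), a3, le_trans a4 (Nat.le_add_right _ _)⟩
    · simp only [if_neg h]
      have hle1 : da * (t + 1 - L) ≤ da * m' := Nat.mul_le_mul_left da (by omega)
      have hle2 : db * (t + 1 - L) ≤ db * m' := Nat.mul_le_mul_left db (by omega)
      exact ⟨by omega, by omega, by omega, by omega⟩
  case _ =>
    intro t ht
    by_cases h : t + 1 < L
    · simp only [if_pos h, if_pos (show t < L by omega)]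
      exact hst t h
    · have hq : ∀ s, L - 1 ≤ s → (if s < L then p s else
          ((A + da * (s + 1 - L), B + db * (s + 1 - L)) : ℕ × ℕ))
          = (A + da * (s + 1 - L), B + db * (s + 1 - L)) := by
        intro s hs
        by_cases h2 : s < L
        · have : s = L - 1 := by omega
          subst this
          have : L - 1 + 1 - L = 0 := by omega
          simp only [if_pos h2, hend, this, Nat.mul_zero, Nat.add_zero]
        · simp only [if_neg h2]
      simp only []
      rw [hq t (by omega), hq (t + 1) (by omega)]
      have e1 : t + 1 + 1 - L = (t + 1 - L) + 1 := by omega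
      rw [e1]
      unfold DTWStep
      simp only
      interval_cases da <;> interval_cases db <;> [skip; skip; skip; skip]
      · omega
      · right; left; constructor <;> ring_nf <;> omega
      · left; constructor <;> ring_nf <;> omega
      · right; right; constructor <;> ring_nf <;> omega
  case _ =>
    unfold pathCost
    rw [Finset.sum_range_add]
    congr 1
    · exact Finset.sum_congr rfl fun t ht => by
        simp only [if_pos (Finset.mem_range.mp ht)]
    · refine Finset.sum_congr rfl fun t ht => ?_
      have h1 : ¬ (L + t < L) := by omega
      have h2 : L + t + 1 - L = t + 1 := by omega
      simp only [if_neg h1, h2]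


/-- Spec for a partial path ending at the corner of block `(i,j)`. -/
def UBSpec (m' i j L : ℕ) (p : ℕ → ℕ × ℕ) : Prop :=
  1 ≤ L ∧ p 0 = (1, 1) ∧ p (L - 1) = (i * m', j * m') ∧
  (∀ t < L, 1 ≤ (p t).1 ∧ (p t).1 ≤ i * m' ∧ 1 ≤ (p t).2 ∧ (p t).2 ≤ j * m') ∧
  ∀ t, t + 1 < L → DTWStep (p t) (p (t + 1))

lemma ub_glue (x y xt yt : ℕ → ℝ) (m' k l : ℕ) (hm' : 1 ≤ m')
    (hx : ∀ i, 1 ≤ i → i ≤ k → ∀ p, (i - 1) * m' < p → p ≤ i * m' → x p = xt i)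
    (hy : ∀ j, 1 ≤ j → j ≤ l → ∀ q, (j - 1) * m' < q → q ≤ j * m' → y q = yt j)
    (i j pi pj da db : ℕ) (hda : da ≤ 1) (hdb : db ≤ 1) (hpos : 1 ≤ da + db)
    (hpi : pi + da = i) (hpj : pj + db = j) (h1pi : 1 ≤ pi) (h1pj : 1 ≤ pj)
    (hik : i ≤ k) (hjl : j ≤ l)
    (L : ℕ) (p : ℕ → ℕ × ℕ) (hspec : UBSpec m' pi pj L p) :
    ∃ L' p', UBSpec m' i j L' p' ∧
      pathCost x y L' p' = pathCost x y L p + m' * (xt i - yt j) ^ 2 := by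
  obtain ⟨hL, h0, hend, hbd, hst⟩ := hspec
  obtain ⟨q, hqL, hq0, hqend, hqbd, hqst, hqcost⟩ :=
    extend_dtw_path x y m' hm' L p da db (pi * m') (pj * m') hda hdb hpos hL h0 hend hbd hst
  have eA : pi * m' + da * m' = i * m' := by rw [← hpi]; ring
  have eB : pj * m' + db * m' = j * m' := by rw [← hpj]; ring
  rw [eA, eB] at hqend hqbd
  refine ⟨L + m', q, ⟨hqL, hq0, hqend, hqbd, hqst⟩, ?_⟩
  rw [hqcost]
  congr 1
  have hterm : ∀ t ∈ Finset.range m',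
      (x (pi * m' + da * (t + 1)) - y (pj * m' + db * (t + 1))) ^ 2 = (xt i - yt j) ^ 2 := by
    intro t ht
    have ht' := Finset.mem_range.mp ht
    have h1i : 1 ≤ i := by omega
    have h1j : 1 ≤ j := by omega
    have hxv : x (pi * m' + da * (t + 1)) = xt i := by
      apply hx i h1i hik
      · have e1 : i * m' = (i - 1) * m' + m' := by
          have e2 : i - 1 + 1 = i := by omega
          calc i * m' = (i - 1 + 1) * m' := by rw [e2]
          _ = (i - 1) * m' + m' := by ring
        rcases (by omega : da = 0 ∧ pi = i ∨ da = 1 ∧ pi = i - 1) with ⟨h, h2⟩ | ⟨h, h2⟩ <;>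
          subst h <;> subst h2 <;> omega
      · have e1 : i * m' = (i - 1) * m' + m' := by
          have e2 : i - 1 + 1 = i := by omega
          calc i * m' = (i - 1 + 1) * m' := by rw [e2]
          _ = (i - 1) * m' + m' := by ring
        rcases (by omega : da = 0 ∧ pi = i ∨ da = 1 ∧ pi = i - 1) with ⟨h, h2⟩ | ⟨h, h2⟩ <;>
          subst h <;> subst h2 <;> omega
    have hyv : y (pj * m' + db * (t + 1)) = yt j := by
      apply hy j h1j hjl
      · have e1 : j * m' = (j - 1) * m' + m' := by
          have e2 : j - 1 + 1 = j := by omega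
          calc j * m' = (j - 1 + 1) * m' := by rw [e2]
          _ = (j - 1) * m' + m' := by ring
        rcases (by omega : db = 0 ∧ pj = j ∨ db = 1 ∧ pj = j - 1) with ⟨h, h2⟩ | ⟨h, h2⟩ <;>
          subst h <;> subst h2 <;> omega
      · have e1 : j * m' = (j - 1) * m' + m' := by
          have e2 : j - 1 + 1 = j := by omega
          calc j * m' = (j - 1 + 1) * m' := by rw [e2]
          _ = (j - 1) * m' + m' := by ring
        rcases (by omega : db = 0 ∧ pj = j ∨ db = 1 ∧ pj = j - 1) with ⟨h, h2⟩ | ⟨h, h2⟩ <;>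
          subst h <;> subst h2 <;> omega
    rw [hxv, hyv]
  rw [Finset.sum_congr rfl hterm, Finset.sum_const, Finset.card_range, nsmul_eq_mul]

lemma ub_exists (m' k l : ℕ) (hm' : 1 ≤ m') (hk : 1 ≤ k) (hl : 1 ≤ l)
    (x y : ℕ → ℝ) (xt yt : ℕ → ℝ)
    (hx : ∀ i, 1 ≤ i → i ≤ k → ∀ p, (i - 1) * m' < p → p ≤ i * m' → x p = xt i)
    (hy : ∀ j, 1 ≤ j → j ≤ l → ∀ q, (j - 1) * m' < q → q ≤ j * m' → y q = yt j)
    (E : ℕ → ℕ → ℝ)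
    (hE11 : E 1 1 = m' * (xt 1 - yt 1) ^ 2)
    (hEi1 : ∀ i, 1 < i → i ≤ k → E i 1 = E (i - 1) 1 + m' * (xt i - yt 1) ^ 2)
    (hE1j : ∀ j, 1 < j → j ≤ l → E 1 j = E 1 (j - 1) + m' * (xt 1 - yt j) ^ 2)
    (hEij : ∀ i j, 1 < i → i ≤ k → 1 < j → j ≤ l →
      E i j = min (min (E (i - 1) j) (E i (j - 1))) (E (i - 1) (j - 1))
        + m' * (xt i - yt j) ^ 2) :
    ∃ L p, IsWarpingPath (k * m') (l * m') L p ∧ pathCost x y L p ≤ E k l := by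
  have main : ∀ N i j, i + j ≤ N → 1 ≤ i → i ≤ k → 1 ≤ j → j ≤ l →
      ∃ L p, UBSpec m' i j L p ∧ pathCost x y L p ≤ E i j := by
    intro N
    induction N with
    | zero => intro i j h h1i _ h1j _; omega
    | succ N ih =>
      intro i j hij h1i hik h1j hjl
      by_cases hi1 : i = 1
      · by_cases hj1 : j = 1
        · subst hi1; subst hj1
          refine ⟨m', fun t => (t + 1, t + 1), ⟨hm', rfl, by simp only [one_mul]; exact Prod.ext (by omega) (by omega), ?_, ?_⟩, ?_⟩
          · intro t ht; simp only; omega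
          · intro t _; right; right; exact ⟨rfl, rfl⟩
          · unfold pathCost
            have hterm : ∀ t ∈ Finset.range m',
                (x ((t : ℕ) + 1) - y ((t : ℕ) + 1)) ^ 2 = (xt 1 - yt 1) ^ 2 := by
              intro t ht
              have ht' := Finset.mem_range.mp ht
              rw [hx 1 le_rfl hk (t + 1) (by omega) (by omega),
                hy 1 le_rfl hl (t + 1) (by omega) (by omega)]
            rw [Finset.sum_congr rfl hterm, Finset.sum_const, Finset.card_range, nsmul_eq_mul,
              hE11]
        · subst hi1
          obtain ⟨L, p, hspec, hcost⟩ := ih 1 (j - 1) (by omega) le_rfl hik (by omega) (by omega)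
          obtain ⟨L', p', hspec', hcost'⟩ := ub_glue x y xt yt m' k l hm' hx hy
            1 j 1 (j - 1) 0 1 (by omega) (by omega) (by omega) (by omega) (by omega)
            (by omega) (by omega) hik hjl L p hspec
          refine ⟨L', p', hspec', ?_⟩
          rw [hcost', hE1j j (by omega) hjl]
          linarith
      · by_cases hj1 : j = 1
        · subst hj1
          obtain ⟨L, p, hspec, hcost⟩ := ih (i - 1) 1 (by omega) (by omega) (by omega) le_rfl hjl
          obtain ⟨L', p', hspec', hcost'⟩ := ub_glue x y xt yt m' k l hm' hx hy
            i 1 (i - 1) 1 1 0 (by omega) (by omega) (by omega) (by omega) (by omega)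
            (by omega) (by omega) hik hjl L p hspec
          refine ⟨L', p', hspec', ?_⟩
          rw [hcost', hEi1 i (by omega) hik]
          linarith
        · have hEe := hEij i j (by omega) hik (by omega) hjl
          rcases min_cases (min (E (i - 1) j) (E i (j - 1))) (E (i - 1) (j - 1)) with
            ⟨hmin, _⟩ | ⟨hmin, _⟩
          · rcases min_cases (E (i - 1) j) (E i (j - 1)) with ⟨hmin2, _⟩ | ⟨hmin2, _⟩
            · -- from (i-1, j), vertical
              obtain ⟨L, p, hspec, hcost⟩ :=
                ih (i - 1) j (by omega) (by omega) (by omega) h1j hjl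
              obtain ⟨L', p', hspec', hcost'⟩ := ub_glue x y xt yt m' k l hm' hx hy
                i j (i - 1) j 1 0 (by omega) (by omega) (by omega) (by omega) (by omega)
                (by omega) h1j hik hjl L p hspec
              refine ⟨L', p', hspec', ?_⟩
              rw [hcost', hEe, hmin, hmin2]
              linarith
            · -- from (i, j-1), horizontal
              obtain ⟨L, p, hspec, hcost⟩ :=
                ih i (j - 1) (by omega) h1i hik (by omega) (by omega)
              obtain ⟨L', p', hspec', hcost'⟩ := ub_glue x y xt yt m' k l hm' hx hy
                i j i (j - 1) 0 1 (by omega) (by omega) (by omega) (by omega) (by omega)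
                h1i (by omega) hik hjl L p hspec
              refine ⟨L', p', hspec', ?_⟩
              rw [hcost', hEe, hmin, hmin2]
              linarith
          · -- from (i-1, j-1), diagonal
            obtain ⟨L, p, hspec, hcost⟩ :=
              ih (i - 1) (j - 1) (by omega) (by omega) (by omega) (by omega) (by omega)
            obtain ⟨L', p', hspec', hcost'⟩ := ub_glue x y xt yt m' k l hm' hx hy
              i j (i - 1) (j - 1) 1 1 (by omega) (by omega) (by omega) (by omega) (by omega)
              (by omega) (by omega) hik hjl L p hspec
            refine ⟨L', p', hspec', ?_⟩
            rw [hcost', hEe, hmin]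
            linarith
  obtain ⟨L, p, ⟨hL, h0, hend, hbd, hst⟩, hcost⟩ := main (k + l) k l le_rfl hk le_rfl hl le_rfl
  exact ⟨L, p, ⟨hL, h0, hend, hbd, fun t ht => hst t ht⟩, hcost⟩


section LB

variable (m' k l : ℕ) (x y xt yt : ℕ → ℝ) (E : ℕ → ℕ → ℝ)

lemma Es_vert (hEi1 : ∀ i, 1 < i → i ≤ k → E i 1 = E (i - 1) 1 + m' * (xt i - yt 1) ^ 2)
    (hEij : ∀ i j, 1 < i → i ≤ k → 1 < j → j ≤ l →
      E i j = min (min (E (i - 1) j) (E i (j - 1))) (E (i - 1) (j - 1))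
        + m' * (xt i - yt j) ^ 2)
    (i j : ℕ) (h1i : 1 ≤ i) (hik : i + 1 ≤ k) (h1j : 1 ≤ j) (hjl : j ≤ l) :
    E (i + 1) j ≤ E i j + m' * (xt (i + 1) - yt j) ^ 2 := by
  rcases eq_or_lt_of_le h1j with h | h
  · rw [← h, hEi1 (i + 1) (by omega) hik]
    simp only [Nat.add_sub_cancel, le_refl]
  · rw [hEij (i + 1) j (by omega) hik (by omega) hjl]
    simp only [Nat.add_sub_cancel]
    have : min (min (E i j) (E (i + 1) (j - 1))) (E i (j - 1)) ≤ E i j :=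
      le_trans (min_le_left _ _) (min_le_left _ _)
    linarith

lemma Es_horiz (hE1j : ∀ j, 1 < j → j ≤ l → E 1 j = E 1 (j - 1) + m' * (xt 1 - yt j) ^ 2)
    (hEij : ∀ i j, 1 < i → i ≤ k → 1 < j → j ≤ l →
      E i j = min (min (E (i - 1) j) (E i (j - 1))) (E (i - 1) (j - 1))
        + m' * (xt i - yt j) ^ 2)
    (i j : ℕ) (h1i : 1 ≤ i) (hik : i ≤ k) (h1j : 1 ≤ j) (hjl : j + 1 ≤ l) :
    E i (j + 1) ≤ E i j + m' * (xt i - yt (j + 1)) ^ 2 := by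
  rcases eq_or_lt_of_le h1i with h | h
  · rw [← h, hE1j (j + 1) (by omega) hjl]
    simp only [Nat.add_sub_cancel, le_refl]
  · rw [hEij i (j + 1) (by omega) hik (by omega) hjl]
    simp only [Nat.add_sub_cancel]
    have : min (min (E (i - 1) (j + 1)) (E i j)) (E (i - 1) j) ≤ E i j :=
      le_trans (min_le_left _ _) (min_le_right _ _)
    linarith

lemma Es_diag (hEij : ∀ i j, 1 < i → i ≤ k → 1 < j → j ≤ l →
      E i j = min (min (E (i - 1) j) (E i (j - 1))) (E (i - 1) (j - 1))
        + m' * (xt i - yt j) ^ 2)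
    (i j : ℕ) (h1i : 1 ≤ i) (hik : i + 1 ≤ k) (h1j : 1 ≤ j) (hjl : j + 1 ≤ l) :
    E (i + 1) (j + 1) ≤ E i j + m' * (xt (i + 1) - yt (j + 1)) ^ 2 := by
  rw [hEij (i + 1) (j + 1) (by omega) hik (by omega) hjl]
  simp only [Nat.add_sub_cancel]
  have : min (min (E i (j + 1)) (E (i + 1) j)) (E i j) ≤ E i j := min_le_right _ _
  linarith

end LB


set_option maxHeartbeats 3200000 in
lemma lb_dtw (m' k l : ℕ) (hm' : 1 ≤ m') (hk : 1 ≤ k) (hl : 1 ≤ l)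
    (x y : ℕ → ℝ) (xt yt : ℕ → ℝ)
    (hx : ∀ i, 1 ≤ i → i ≤ k → ∀ p, (i - 1) * m' < p → p ≤ i * m' → x p = xt i)
    (hy : ∀ j, 1 ≤ j → j ≤ l → ∀ q, (j - 1) * m' < q → q ≤ j * m' → y q = yt j)
    (E : ℕ → ℕ → ℝ)
    (hE11 : E 1 1 = m' * (xt 1 - yt 1) ^ 2)
    (hEi1 : ∀ i, 1 < i → i ≤ k → E i 1 = E (i - 1) 1 + m' * (xt i - yt 1) ^ 2)
    (hE1j : ∀ j, 1 < j → j ≤ l → E 1 j = E 1 (j - 1) + m' * (xt 1 - yt j) ^ 2)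
    (hEij : ∀ i j, 1 < i → i ≤ k → 1 < j → j ≤ l →
      E i j = min (min (E (i - 1) j) (E i (j - 1))) (E (i - 1) (j - 1))
        + m' * (xt i - yt j) ^ 2)
    (L : ℕ) (p : ℕ → ℕ × ℕ) (hwp : IsWarpingPath (k * m') (l * m') L p) :
    E k l ≤ pathCost x y L p := by
  obtain ⟨hL, h0, hend, hbd, hst⟩ := hwp
  have cellval : ∀ i' j' u' v' a b, i' + 1 ≤ k → j' + 1 ≤ l →
      1 ≤ u' → u' ≤ m' → 1 ≤ v' → v' ≤ m' →
      a = i' * m' + u' → b = j' * m' + v' →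
      (x a - y b) ^ 2 = (xt (i' + 1) - yt (j' + 1)) ^ 2 := by
    intro i' j' u' v' a b hik hjl h1u hum h1v hvm hA hB
    have er1 : (i' + 1) * m' = i' * m' + m' := by ring
    have er2 : (j' + 1) * m' = j' * m' + m' := by ring
    rw [hx (i' + 1) (by omega) hik a (by simp only [Nat.add_sub_cancel]; omega)
        (by omega),
      hy (j' + 1) (by omega) hjl b (by simp only [Nat.add_sub_cancel]; omega)
        (by omega)]
  have key : ∀ s, s < L →
      ∃ i j u v lA lD lB lL : ℕ,
        i + 1 ≤ k ∧ j + 1 ≤ l ∧ 1 ≤ u ∧ u ≤ m' ∧ 1 ≤ v ∧ v ≤ m' ∧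
        (p s).1 = i * m' + u ∧ (p s).2 = j * m' + v ∧
        lA + lD + lB + lL = m' ∧ lD + lB + u ≤ m' ∧ lD + lL + v ≤ m' ∧
        (lB = 0 ∨ lL = 0) ∧ (lB = 0 ∨ 1 ≤ i) ∧ (lL = 0 ∨ 1 ≤ j) ∧
        (lD = 0 ∨ (i = 0 ∧ j = 0) ∨ (1 ≤ i ∧ 1 ≤ j)) ∧
        (lA : ℝ) * E (i + 1) (j + 1) + (lD : ℝ) * (if i = 0 then 0 else E i j) +
          (lB : ℝ) * E i (j + 1) + (lL : ℝ) * E (i + 1) j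
          ≤ (m' : ℝ) * ∑ t ∈ Finset.range (s + 1), (x (p t).1 - y (p t).2) ^ 2 := by
    intro s
    induction s with
    | zero =>
      intro hsL
      refine ⟨0, 0, 1, 1, 1, m' - 1, 0, 0, hk, hl, le_rfl, hm', le_rfl, hm',
        by rw [h0]; simp, by rw [h0]; simp, by omega, by omega, by omega,
        Or.inl rfl, Or.inl rfl, Or.inl rfl, Or.inr (Or.inl ⟨rfl, rfl⟩), ?_⟩
      have hcell : (x (p 0).1 - y (p 0).2) ^ 2 = (xt 1 - yt 1) ^ 2 := by
        rw [h0]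
        simp only
        rw [hx 1 le_rfl hk 1 (by simp) (by omega), hy 1 le_rfl hl 1 (by simp) (by omega)]
      rw [Finset.sum_range_one, hcell]
      simp [hE11]
    | succ s ih =>
      intro hsL
      obtain ⟨i, j, u, v, lA, lD, lB, lL, hik, hjl, h1u, hum, h1v, hvm, hpa, hpb, hsum,
        hBu, hLv, hDbl, hgb, hgl, hgd, hval⟩ := ih (by omega)
      have hstep := hst s (by omega)
      have hbnd2 := hbd (s + 1) hsL
      rcases hstep with ⟨ha, hb⟩ | ⟨ha, hb⟩ | ⟨ha, hb⟩
      · -- vertical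
        by_cases hu : u = m'
        · have er1 : (i + 1) * m' = i * m' + m' := by ring
          have hik2 : i + 1 + 1 ≤ k := by
            by_contra hcon
            have hkk : k ≤ i + 1 := by omega
            have hmm : k * m' ≤ (i + 1) * m' := Nat.mul_le_mul_right m' hkk
            have := hbnd2.2.1
            omega
          have hD0 : lD = 0 := by omega
          have hB0 : lB = 0 := by omega
          subst hD0; subst hB0
          have hcell : (x (p (s + 1)).1 - y (p (s + 1)).2) ^ 2
              = (xt (i + 1 + 1) - yt (j + 1)) ^ 2 :=
            cellval (i + 1) j 1 v _ _ hik2 hjl le_rfl hm' h1v hvm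
              (by omega) (by rw [hb, hpb])
          rcases lL with _ | c
          · obtain ⟨a0, ha0⟩ : ∃ a0, lA = a0 + 1 := ⟨lA - 1, by omega⟩
            subst ha0
            refine ⟨i + 1, j, 1, v, 1, 0, a0, 0, hik2, hjl, le_rfl, hm', h1v, hvm,
              by omega, by rw [hb, hpb], by omega, by omega, by omega, Or.inr rfl,
              Or.inr (by omega), Or.inl rfl, Or.inl rfl, ?_⟩
            have estep := Es_vert m' k l xt yt E hEi1 hEij (i + 1) (j + 1) (by omega) hik2
              (by omega) hjl
            rw [Finset.sum_range_succ, hcell, mul_add]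
            push_cast
            push_cast at hval
            linarith [estep, hval]
          · refine ⟨i + 1, j, 1, v, 1, c, lA, 0, hik2, hjl, le_rfl, hm', h1v, hvm,
              by omega, by rw [hb, hpb], by omega, by omega, by omega, Or.inr rfl,
              Or.inr (by omega), Or.inl rfl,
              Or.inr (Or.inr ⟨by omega, by omega⟩), ?_⟩
            have h1j : 1 ≤ j := by omega
            have estep := Es_diag m' k l xt yt E hEij (i + 1) j (by omega) hik2 h1j hjl
            have hif : (if i + 1 = 0 then (0:ℝ) else E (i + 1) j) = E (i + 1) j :=
              if_neg (by omega)
            rw [Finset.sum_range_succ, hcell, mul_add, hif]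
            push_cast
            push_cast at hval
            linarith [estep, hval]
        · -- same block
          have hcell : (x (p (s + 1)).1 - y (p (s + 1)).2) ^ 2
              = (xt (i + 1) - yt (j + 1)) ^ 2 :=
            cellval i j (u + 1) v _ _ hik hjl (by omega) (by omega)
              h1v hvm (by omega) (by rw [hb, hpb])
          rcases lD with _ | d
          · rcases lB with _ | b'
            · refine ⟨i, j, u + 1, v, lA, 0, 0, lL, hik, hjl, by omega, by omega, h1v, hvm,
                by omega, by rw [hb, hpb], by omega, by omega, by omega, Or.inl rfl,
                Or.inl rfl, hgl, Or.inl rfl, ?_⟩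
              rw [Finset.sum_range_succ, hcell, mul_add]
              have hc0 : (0:ℝ) ≤ ↑m' * (xt (i + 1) - yt (j + 1)) ^ 2 := by positivity
              linarith [hval]
            · have hL0 : lL = 0 := by omega
              subst hL0
              have h1i : 1 ≤ i := by omega
              refine ⟨i, j, u + 1, v, lA + 1, 0, b', 0, hik, hjl, by omega, by omega,
                h1v, hvm, by omega, by rw [hb, hpb], by omega, by omega, by omega,
                Or.inr rfl, Or.inr h1i, Or.inl rfl, Or.inl rfl, ?_⟩
              have estep := Es_vert m' k l xt yt E hEi1 hEij i (j + 1) h1i hik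
                (by omega) hjl
              rw [Finset.sum_range_succ, hcell, mul_add]
              push_cast
              push_cast at hval
              linarith [estep, hval]
          · have estep : E (i + 1) (j + 1)
                ≤ (if i = 0 then (0:ℝ) else E i j) + ↑m' * (xt (i + 1) - yt (j + 1)) ^ 2 := by
              rcases hgd with h | h | h
              · omega
              · obtain ⟨hi0, hj0⟩ := h
                subst hi0; subst hj0
                rw [if_pos rfl]
                simpa using hE11.le
              · rw [if_neg (by omega)]
                exact Es_diag m' k l xt yt E hEij i j h.1 hik h.2 hjl
            refine ⟨i, j, u + 1, v, lA + 1, d, lB, lL, hik, hjl, by omega, by omega,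
              h1v, hvm, by omega, by rw [hb, hpb], by omega, by omega, by omega,
              hDbl, hgb, hgl, Or.inr (hgd.resolve_left (by omega)), ?_⟩
            rw [Finset.sum_range_succ, hcell, mul_add]
            push_cast
            push_cast at hval
            linarith [estep, hval]
      · -- horizontal
        by_cases hv : v = m'
        · have er1 : (j + 1) * m' = j * m' + m' := by ring
          have hjl2 : j + 1 + 1 ≤ l := by
            by_contra hcon
            have hll : l ≤ j + 1 := by omega
            have hmm : l * m' ≤ (j + 1) * m' := Nat.mul_le_mul_right m' hll
            have := hbnd2.2.2.2
            omega
          have hD0 : lD = 0 := by omega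
          have hL0 : lL = 0 := by omega
          subst hD0; subst hL0
          have hcell : (x (p (s + 1)).1 - y (p (s + 1)).2) ^ 2
              = (xt (i + 1) - yt (j + 1 + 1)) ^ 2 :=
            cellval i (j + 1) u 1 _ _ hik hjl2 h1u hum le_rfl hm'
              (by rw [ha, hpa]) (by omega)
          rcases lB with _ | b
          · obtain ⟨a0, ha0⟩ : ∃ a0, lA = a0 + 1 := ⟨lA - 1, by omega⟩
            subst ha0
            refine ⟨i, j + 1, u, 1, 1, 0, 0, a0, hik, hjl2, h1u, hum, le_rfl, hm',
              by rw [ha, hpa], by omega, by omega, by omega, by omega, Or.inl rfl,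
              Or.inl rfl, Or.inr (by omega), Or.inl rfl, ?_⟩
            have estep := Es_horiz m' k l xt yt E hE1j hEij (i + 1) (j + 1) (by omega) hik
              (by omega) hjl2
            rw [Finset.sum_range_succ, hcell, mul_add]
            push_cast
            push_cast at hval
            linarith [estep, hval]
          · refine ⟨i, j + 1, u, 1, 1, b, 0, lA, hik, hjl2, h1u, hum, le_rfl, hm',
              by rw [ha, hpa], by omega, by omega, by omega, by omega, Or.inl rfl,
              Or.inr (by omega), Or.inr (by omega),
              Or.inr (Or.inr ⟨by omega, by omega⟩), ?_⟩
            have h1i : 1 ≤ i := by omega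
            have estep := Es_diag m' k l xt yt E hEij i (j + 1) h1i hik (by omega) hjl2
            have hif : (if i = 0 then (0:ℝ) else E i (j + 1)) = E i (j + 1) :=
              if_neg (by omega)
            rw [Finset.sum_range_succ, hcell, mul_add, hif]
            push_cast
            push_cast at hval
            linarith [estep, hval]
        · -- same block
          have hcell : (x (p (s + 1)).1 - y (p (s + 1)).2) ^ 2
              = (xt (i + 1) - yt (j + 1)) ^ 2 :=
            cellval i j u (v + 1) _ _ hik hjl h1u hum (by omega) (by omega)
              (by rw [ha, hpa]) (by omega)
          rcases lD with _ | d
          · rcases lL with _ | c'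
            · refine ⟨i, j, u, v + 1, lA, 0, lB, 0, hik, hjl, h1u, hum, by omega, by omega,
                by rw [ha, hpa], by omega, by omega, by omega, by omega, Or.inr rfl,
                hgb, Or.inl rfl, Or.inl rfl, ?_⟩
              rw [Finset.sum_range_succ, hcell, mul_add]
              have hc0 : (0:ℝ) ≤ ↑m' * (xt (i + 1) - yt (j + 1)) ^ 2 := by positivity
              linarith [hval]
            · have hB0 : lB = 0 := by omega
              subst hB0
              have h1j : 1 ≤ j := by omega
              refine ⟨i, j, u, v + 1, lA + 1, 0, 0, c', hik, hjl, h1u, hum, by omega,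
                by omega, by rw [ha, hpa], by omega, by omega, by omega, by omega,
                Or.inl rfl, Or.inl rfl, Or.inr h1j, Or.inl rfl, ?_⟩
              have estep := Es_horiz m' k l xt yt E hE1j hEij (i + 1) j (by omega) hik
                h1j hjl
              rw [Finset.sum_range_succ, hcell, mul_add]
              push_cast
              push_cast at hval
              linarith [estep, hval]
          · have estep : E (i + 1) (j + 1)
                ≤ (if i = 0 then (0:ℝ) else E i j) + ↑m' * (xt (i + 1) - yt (j + 1)) ^ 2 := by
              rcases hgd with h | h | h
              · omega
              · obtain ⟨hi0, hj0⟩ := h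
                subst hi0; subst hj0
                rw [if_pos rfl]
                simpa using hE11.le
              · rw [if_neg (by omega)]
                exact Es_diag m' k l xt yt E hEij i j h.1 hik h.2 hjl
            refine ⟨i, j, u, v + 1, lA + 1, d, lB, lL, hik, hjl, h1u, hum, by omega,
              by omega, by rw [ha, hpa], by omega, by omega, by omega, by omega,
              hDbl, hgb, hgl, Or.inr (hgd.resolve_left (by omega)), ?_⟩
            rw [Finset.sum_range_succ, hcell, mul_add]
            push_cast
            push_cast at hval
            linarith [estep, hval]
      · -- diagonal
        by_cases hu : u = m' <;> by_cases hv : v = m'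
        · -- both cross
          have er1 : (i + 1) * m' = i * m' + m' := by ring
          have er2 : (j + 1) * m' = j * m' + m' := by ring
          have hik2 : i + 1 + 1 ≤ k := by
            by_contra hcon
            have hkk : k ≤ i + 1 := by omega
            have hmm : k * m' ≤ (i + 1) * m' := Nat.mul_le_mul_right m' hkk
            have := hbnd2.2.1
            omega
          have hjl2 : j + 1 + 1 ≤ l := by
            by_contra hcon
            have hll : l ≤ j + 1 := by omega
            have hmm : l * m' ≤ (j + 1) * m' := Nat.mul_le_mul_right m' hll
            have := hbnd2.2.2.2
            omega
          have hD0 : lD = 0 := by omega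
          have hB0 : lB = 0 := by omega
          have hL0 : lL = 0 := by omega
          subst hD0; subst hB0; subst hL0
          obtain ⟨a0, ha0⟩ : ∃ a0, lA = a0 + 1 := ⟨lA - 1, by omega⟩
          subst ha0
          have hcell : (x (p (s + 1)).1 - y (p (s + 1)).2) ^ 2
              = (xt (i + 1 + 1) - yt (j + 1 + 1)) ^ 2 :=
            cellval (i + 1) (j + 1) 1 1 _ _ hik2 hjl2 le_rfl hm' le_rfl hm'
              (by omega) (by omega)
          refine ⟨i + 1, j + 1, 1, 1, 1, a0, 0, 0, hik2, hjl2, le_rfl, hm', le_rfl, hm',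
            by omega, by omega, by omega, by omega, by omega, Or.inl rfl, Or.inl rfl,
            Or.inl rfl, Or.inr (Or.inr ⟨by omega, by omega⟩), ?_⟩
          have estep := Es_diag m' k l xt yt E hEij (i + 1) (j + 1) (by omega) hik2
            (by omega) hjl2
          have hif : (if i + 1 = 0 then (0:ℝ) else E (i + 1) (j + 1)) = E (i + 1) (j + 1) :=
            if_neg (by omega)
          rw [Finset.sum_range_succ, hcell, mul_add, hif]
          push_cast
          push_cast at hval
          linarith [estep, hval]
        · -- row cross only
          have er1 : (i + 1) * m' = i * m' + m' := by ring
          have hik2 : i + 1 + 1 ≤ k := by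
            by_contra hcon
            have hkk : k ≤ i + 1 := by omega
            have hmm : k * m' ≤ (i + 1) * m' := Nat.mul_le_mul_right m' hkk
            have := hbnd2.2.1
            omega
          have hD0 : lD = 0 := by omega
          have hB0 : lB = 0 := by omega
          subst hD0; subst hB0
          have hcell : (x (p (s + 1)).1 - y (p (s + 1)).2) ^ 2
              = (xt (i + 1 + 1) - yt (j + 1)) ^ 2 :=
            cellval (i + 1) j 1 (v + 1) _ _ hik2 hjl le_rfl hm' (by omega) (by omega)
              (by omega) (by omega)
          rcases lL with _ | c
          · obtain ⟨a0, ha0⟩ : ∃ a0, lA = a0 + 1 := ⟨lA - 1, by omega⟩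
            subst ha0
            refine ⟨i + 1, j, 1, v + 1, 1, 0, a0, 0, hik2, hjl, le_rfl, hm', by omega,
              by omega, by omega, by omega, by omega, by omega, by omega, Or.inr rfl,
              Or.inr (by omega), Or.inl rfl, Or.inl rfl, ?_⟩
            have estep := Es_vert m' k l xt yt E hEi1 hEij (i + 1) (j + 1) (by omega) hik2
              (by omega) hjl
            rw [Finset.sum_range_succ, hcell, mul_add]
            push_cast
            push_cast at hval
            linarith [estep, hval]
          · refine ⟨i + 1, j, 1, v + 1, 1, c, lA, 0, hik2, hjl, le_rfl, hm', by omega,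
              by omega, by omega, by omega, by omega, by omega, by omega, Or.inr rfl,
              Or.inr (by omega), Or.inl rfl,
              Or.inr (Or.inr ⟨by omega, by omega⟩), ?_⟩
            have h1j : 1 ≤ j := by omega
            have estep := Es_diag m' k l xt yt E hEij (i + 1) j (by omega) hik2 h1j hjl
            have hif : (if i + 1 = 0 then (0:ℝ) else E (i + 1) j) = E (i + 1) j :=
              if_neg (by omega)
            rw [Finset.sum_range_succ, hcell, mul_add, hif]
            push_cast
            push_cast at hval
            linarith [estep, hval]
        · -- col cross only
          have er2 : (j + 1) * m' = j * m' + m' := by ring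
          have hjl2 : j + 1 + 1 ≤ l := by
            by_contra hcon
            have hll : l ≤ j + 1 := by omega
            have hmm : l * m' ≤ (j + 1) * m' := Nat.mul_le_mul_right m' hll
            have := hbnd2.2.2.2
            omega
          have hD0 : lD = 0 := by omega
          have hL0 : lL = 0 := by omega
          subst hD0; subst hL0
          have hcell : (x (p (s + 1)).1 - y (p (s + 1)).2) ^ 2
              = (xt (i + 1) - yt (j + 1 + 1)) ^ 2 :=
            cellval i (j + 1) (u + 1) 1 _ _ hik hjl2 (by omega) (by omega) le_rfl hm'
              (by omega) (by omega)
          rcases lB with _ | b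
          · obtain ⟨a0, ha0⟩ : ∃ a0, lA = a0 + 1 := ⟨lA - 1, by omega⟩
            subst ha0
            refine ⟨i, j + 1, u + 1, 1, 1, 0, 0, a0, hik, hjl2, by omega, by omega,
              le_rfl, hm', by omega, by omega, by omega, by omega, by omega, Or.inl rfl,
              Or.inl rfl, Or.inr (by omega), Or.inl rfl, ?_⟩
            have estep := Es_horiz m' k l xt yt E hE1j hEij (i + 1) (j + 1) (by omega) hik
              (by omega) hjl2
            rw [Finset.sum_range_succ, hcell, mul_add]
            push_cast
            push_cast at hval
            linarith [estep, hval]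
          · refine ⟨i, j + 1, u + 1, 1, 1, b, 0, lA, hik, hjl2, by omega, by omega,
              le_rfl, hm', by omega, by omega, by omega, by omega, by omega, Or.inl rfl,
              Or.inr (by omega), Or.inr (by omega),
              Or.inr (Or.inr ⟨by omega, by omega⟩), ?_⟩
            have h1i : 1 ≤ i := by omega
            have estep := Es_diag m' k l xt yt E hEij i (j + 1) h1i hik (by omega) hjl2
            have hif : (if i = 0 then (0:ℝ) else E i (j + 1)) = E i (j + 1) :=
              if_neg (by omega)
            rw [Finset.sum_range_succ, hcell, mul_add, hif]
            push_cast
            push_cast at hval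
            linarith [estep, hval]
        · -- same block diagonal
          have hcell : (x (p (s + 1)).1 - y (p (s + 1)).2) ^ 2
              = (xt (i + 1) - yt (j + 1)) ^ 2 :=
            cellval i j (u + 1) (v + 1) _ _ hik hjl (by omega) (by omega) (by omega)
              (by omega) (by omega) (by omega)
          rcases lD with _ | d
          · rcases lB with _ | b
            · rcases lL with _ | c
              · refine ⟨i, j, u + 1, v + 1, lA, 0, 0, 0, hik, hjl, by omega, by omega,
                  by omega, by omega, by omega, by omega, by omega, by omega, by omega,
                  Or.inl rfl, Or.inl rfl, Or.inl rfl, Or.inl rfl, ?_⟩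
                rw [Finset.sum_range_succ, hcell, mul_add]
                have hc0 : (0:ℝ) ≤ ↑m' * (xt (i + 1) - yt (j + 1)) ^ 2 := by positivity
                linarith [hval]
              · have h1j : 1 ≤ j := by omega
                refine ⟨i, j, u + 1, v + 1, lA + 1, 0, 0, c, hik, hjl, by omega, by omega,
                  by omega, by omega, by omega, by omega, by omega, by omega, by omega,
                  Or.inl rfl, Or.inl rfl, Or.inr h1j, Or.inl rfl, ?_⟩
                have estep := Es_horiz m' k l xt yt E hE1j hEij (i + 1) j (by omega) hik
                  h1j hjl
                rw [Finset.sum_range_succ, hcell, mul_add]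
                push_cast
                push_cast at hval
                linarith [estep, hval]
            · have hL0 : lL = 0 := by omega
              subst hL0
              have h1i : 1 ≤ i := by omega
              refine ⟨i, j, u + 1, v + 1, lA + 1, 0, b, 0, hik, hjl, by omega, by omega,
                by omega, by omega, by omega, by omega, by omega, by omega, by omega,
                Or.inr rfl, Or.inr h1i, Or.inl rfl, Or.inl rfl, ?_⟩
              have estep := Es_vert m' k l xt yt E hEi1 hEij i (j + 1) h1i hik
                (by omega) hjl
              rw [Finset.sum_range_succ, hcell, mul_add]
              push_cast
              push_cast at hval
              linarith [estep, hval]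
          · have estep : E (i + 1) (j + 1)
                ≤ (if i = 0 then (0:ℝ) else E i j) + ↑m' * (xt (i + 1) - yt (j + 1)) ^ 2 := by
              rcases hgd with h | h | h
              · omega
              · obtain ⟨hi0, hj0⟩ := h
                subst hi0; subst hj0
                rw [if_pos rfl]
                simpa using hE11.le
              · rw [if_neg (by omega)]
                exact Es_diag m' k l xt yt E hEij i j h.1 hik h.2 hjl
            refine ⟨i, j, u + 1, v + 1, lA + 1, d, lB, lL, hik, hjl, by omega, by omega,
              by omega, by omega, by omega, by omega, by omega, by omega, by omega,
              hDbl, hgb, hgl, Or.inr (hgd.resolve_left (by omega)), ?_⟩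
            rw [Finset.sum_range_succ, hcell, mul_add]
            push_cast
            push_cast at hval
            linarith [estep, hval]
  -- conclude
  obtain ⟨i, j, u, v, lA, lD, lB, lL, hik, hjl, h1u, hum, h1v, hvm, hpa, hpb, hsum,
    hBu, hLv, hDbl, hgb, hgl, hgd, hval⟩ := key (L - 1) (by omega)
  rw [hend] at hpa hpb
  have eik : i * m' + m' = (i + 1) * m' := by ring
  have ekk : (i + 1) * m' ≤ k * m' := Nat.mul_le_mul_right m' hik
  have hieq : i + 1 = k ∧ u = m' := by
    constructor
    · by_contra hcon
      have hlt : i + 1 < k := by omega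
      have : (i + 1) * m' + m' ≤ k * m' := by
        have : (i + 1) * m' + m' = (i + 2) * m' := by ring
        rw [this]
        exact Nat.mul_le_mul_right m' (by omega)
      omega
    · omega
  have ejl : j * m' + m' = (j + 1) * m' := by ring
  have ell : (j + 1) * m' ≤ l * m' := Nat.mul_le_mul_right m' hjl
  have hjeq : j + 1 = l ∧ v = m' := by
    constructor
    · by_contra hcon
      have hlt : j + 1 < l := by omega
      have : (j + 1) * m' + m' ≤ l * m' := by
        have : (j + 1) * m' + m' = (j + 2) * m' := by ring
        rw [this]
        exact Nat.mul_le_mul_right m' (by omega)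
      omega
    · omega
  obtain ⟨hklf, huf⟩ := hieq
  obtain ⟨hllf, hvf⟩ := hjeq
  have hD0 : lD = 0 := by omega
  have hB0 : lB = 0 := by omega
  have hL0 : lL = 0 := by omega
  have hA0 : lA = m' := by omega
  rw [hD0, hB0, hL0, hA0, hklf, hllf] at hval
  have hrange : L - 1 + 1 = L := by omega
  rw [hrange] at hval
  simp only [Nat.cast_zero, zero_mul, add_zero] at hval
  have hmpos : (0 : ℝ) < m' := by positivity
  unfold pathCost
  exact le_of_mul_le_mul_left (by linarith) hmpos


/-- Suppose `x` consists of `k` runs of length `m'` with values `xt 1, …, xt k`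
and `y` consists of `ℓ` runs of the same length `m'` with values
`yt 1, …, yt ℓ`, so all blocks are squares of side `m'`. If `E` satisfies the
blocked dynamic program with block cost `m' * (xt i − yt j)²`, then
`dtw(x,y)² = E k ℓ`: the blocked DTW heuristic is exact for square blocks. -/
theorem dtwSq_eq_blocked_dp (m' k l : ℕ) (hm' : 1 ≤ m') (hk : 1 ≤ k) (hl : 1 ≤ l)
    (x y : ℕ → ℝ) (xt yt : ℕ → ℝ)
    (hx : ∀ i, 1 ≤ i → i ≤ k → ∀ p, (i - 1) * m' < p → p ≤ i * m' → x p = xt i)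
    (hy : ∀ j, 1 ≤ j → j ≤ l → ∀ q, (j - 1) * m' < q → q ≤ j * m' → y q = yt j)
    (E : ℕ → ℕ → ℝ)
    (hE11 : E 1 1 = m' * (xt 1 - yt 1) ^ 2)
    (hEi1 : ∀ i, 1 < i → i ≤ k → E i 1 = E (i - 1) 1 + m' * (xt i - yt 1) ^ 2)
    (hE1j : ∀ j, 1 < j → j ≤ l → E 1 j = E 1 (j - 1) + m' * (xt 1 - yt j) ^ 2)
    (hEij : ∀ i j, 1 < i → i ≤ k → 1 < j → j ≤ l →
      E i j = min (min (E (i - 1) j) (E i (j - 1))) (E (i - 1) (j - 1))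
        + m' * (xt i - yt j) ^ 2) :
    dtwSq x y (k * m') (l * m') = E k l := by
  obtain ⟨L, p, hwp, hcost⟩ := ub_exists m' k l hm' hk hl x y xt yt hx hy E hE11 hEi1 hE1j hEij
  have hlow : ∀ c ∈ {c : ℝ | ∃ L p, IsWarpingPath (k * m') (l * m') L p ∧
      c = pathCost x y L p}, E k l ≤ c := by
    rintro c ⟨L', p', hwp', rfl⟩
    exact lb_dtw m' k l hm' hk hl x y xt yt hx hy E hE11 hEi1 hE1j hEij L' p' hwp'
  have heq : pathCost x y L p = E k l :=
    le_antisymm hcost (lb_dtw m' k l hm' hk hl x y xt yt hx hy E hE11 hEi1 hE1j hEij L p hwp)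
  have hmem : E k l ∈ {c : ℝ | ∃ L p, IsWarpingPath (k * m') (l * m') L p ∧
      c = pathCost x y L p} := ⟨L, p, hwp, heq.symm⟩
  exact le_antisymm (csInf_le ⟨E k l, fun c hc => hlow c hc⟩ hmem)
    (le_csInf ⟨E k l, hmem⟩ hlow)
end

section
/- Let x and y be time series structured into blocks B_{i,j} = [a_{i−1}+1, a_i] × [b_{j−1}+1, b_j] according to their run-length encodings, with constant local cost c_{i,j} = (x̃_i − ỹ_j)² inside each block. Then there exists an optimal warping path p (one minimizing Σ_{(i,j)∈p}(x_i−y_j)²) such that whenever p enters a block B, p first moves diagonally inside B until it reaches the top boundary (row a_i) or right boundary (column b_j) of B. -/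
open Finset



lemma wp_length_le {m n L : ℕ} {p : ℕ → ℕ × ℕ} (hp : IsWarpingPath m n L p) :
    L + 1 ≤ m + n := by
  obtain ⟨hL, h0, hend, hbnd, hstp⟩ := hp
  have key : ∀ s, s < L → s + 2 ≤ (p s).1 + (p s).2 := by
    intro s
    induction s with
    | zero => intro _; rw [h0]; simp
    | succ t ih =>
      intro h
      have ht := ih (by omega)
      have hs := hstp t (by omega)
      rcases hs with ⟨h1, h2⟩ | ⟨h1, h2⟩ | ⟨h1, h2⟩ <;> omega
  have h := key (L - 1) (by omega)
  rw [hend] at h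
  simp only at h
  omega

lemma exists_wp (m n : ℕ) (hm : 1 ≤ m) (hn : 1 ≤ n) : ∃ L p, IsWarpingPath m n L p := by
  refine ⟨m + n - 1, fun s => if s < m then (s + 1, 1) else (m, s - m + 2),
    by omega, ?_, ?_, ?_, ?_⟩
  · simp [show 0 < m by omega]
  · dsimp only
    rw [show m + n - 1 - 1 = m + n - 2 by omega]
    split
    · next h => simp only [Prod.mk.injEq, true_and, and_true]; omega
    · next h => simp only [Prod.mk.injEq, true_and, and_true]; omega
  · intro s hs
    dsimp only
    split <;> simp only <;> omega
  · intro s hs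
    dsimp only
    by_cases h1 : s + 1 < m
    · rw [if_pos h1, if_pos (by omega)]
      left; simp
    · by_cases h2 : s < m
      · rw [if_neg h1, if_pos h2]
        right; left; simp only [Prod.mk.injEq, true_and, and_true]; omega
      · rw [if_neg h1, if_neg h2]
        right; left; simp only [Prod.mk.injEq, true_and, and_true]; omega

lemma dtw_attained (x y : ℕ → ℝ) (m n : ℕ) (hm : 1 ≤ m) (hn : 1 ≤ n) :
    ∃ L p, IsWarpingPath m n L p ∧ pathCost x y L p = dtwSq x y m n := by
  classical
  have hne : {c : ℝ | ∃ L p, IsWarpingPath m n L p ∧ c = pathCost x y L p}.Nonempty := by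
    obtain ⟨L, p, hp⟩ := exists_wp m n hm hn
    exact ⟨_, L, p, hp, rfl⟩
  have hfin : {c : ℝ | ∃ L p, IsWarpingPath m n L p ∧ c = pathCost x y L p}.Finite := by
    apply Set.Finite.subset (Set.finite_range
      (fun fL : (Fin (m + n) → Fin (m + 1) × Fin (n + 1)) × Fin (m + n + 1) =>
        ∑ ℓ ∈ Finset.range (m + n), if hh : ℓ < m + n then
          (if ℓ < (fL.2 : ℕ) then
            (x ((fL.1 ⟨ℓ, hh⟩).1 : ℕ) - y ((fL.1 ⟨ℓ, hh⟩).2 : ℕ)) ^ 2 else 0) else 0))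
    rintro c ⟨L, p, hp, rfl⟩
    have hLN : L + 1 ≤ m + n := wp_length_le hp
    refine ⟨⟨fun ℓ => (⟨min (p ℓ).1 m, by omega⟩, ⟨min (p ℓ).2 n, by omega⟩),
      ⟨L, by omega⟩⟩, ?_⟩
    simp only
    calc ∑ ℓ ∈ Finset.range (m + n), (if hh : ℓ < m + n then
          (if ℓ < L then (x (min (p ℓ).1 m) - y (min (p ℓ).2 n)) ^ 2 else 0) else 0)
        = ∑ ℓ ∈ Finset.range L, (if hh : ℓ < m + n then
          (if ℓ < L then (x (min (p ℓ).1 m) - y (min (p ℓ).2 n)) ^ 2 else 0) else 0) := by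
          refine (Finset.sum_subset (Finset.range_subset_range.2 (by omega)) ?_).symm
          intro j hj hnj
          rw [mem_range] at hj
          rw [mem_range] at hnj
          rw [dif_pos hj, if_neg hnj]
      _ = pathCost x y L p := by
          rw [pathCost]
          apply Finset.sum_congr rfl
          intro j hj
          rw [mem_range] at hj
          have hb := hp.2.2.2.1 j hj
          rw [dif_pos (by omega), if_pos hj, min_eq_left hb.2.1, min_eq_left hb.2.2.2]
  have hmem := hne.csInf_mem hfin
  obtain ⟨L, p, hp, hc⟩ := hmem
  exact ⟨L, p, hp, hc.symm⟩

lemma swap_wp {m n L : ℕ} {p : ℕ → ℕ × ℕ} (hp : IsWarpingPath m n L p) :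
    IsWarpingPath n m L (fun s => ((p s).2, (p s).1)) := by
  obtain ⟨h1, h2, h3, h4, h5⟩ := hp
  refine ⟨h1, by simp [h2], by simp [h3], fun s hs => ?_, fun s hs => ?_⟩
  · have := h4 s hs
    exact ⟨this.2.2.1, this.2.2.2, this.1, this.2.1⟩
  · rcases h5 s hs with ⟨hA, hB⟩ | ⟨hA, hB⟩ | ⟨hA, hB⟩ <;> dsimp only <;> tauto

lemma swap_cost (x y : ℕ → ℝ) (L : ℕ) (p : ℕ → ℕ × ℕ) :
    pathCost y x L (fun s => ((p s).2, (p s).1)) = pathCost x y L p := by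
  unfold pathCost
  apply Finset.sum_congr rfl
  intro s _
  ring

lemma swap_weight (L : ℕ) (p : ℕ → ℕ × ℕ) :
    ∑ s ∈ Finset.range L, (((fun s => ((p s).2, (p s).1)) s).1
      + ((fun s => ((p s).2, (p s).1)) s).2)
    = ∑ s ∈ Finset.range L, ((p s).1 + (p s).2) := by
  apply Finset.sum_congr rfl
  intro s _
  dsimp only
  omega

lemma const_of_interior (l n : ℕ) (nr : ℕ → ℕ)
    (b : ℕ → ℕ) (hb : ∀ j, b j = ∑ s ∈ Finset.Icc 1 j, nr s) (hbn : b l = n)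
    (y yt : ℕ → ℝ)
    (hy : ∀ j, 1 ≤ j → j ≤ l → ∀ q, b (j - 1) < q → q ≤ b j → y q = yt j)
    (c : ℕ) (h1 : 1 ≤ c) (h2 : c ≤ n) (hne : ∀ j ∈ Finset.Icc 1 l, c ≠ b j) :
    c < n ∧ y c = y (c + 1) := by
  classical
  have hb0 : b 0 = 0 := by rw [hb]; simp
  have hex : ∃ j, c ≤ b j := ⟨l, by rw [hbn]; exact h2⟩
  obtain ⟨j, hjs, hjmin⟩ : ∃ j, c ≤ b j ∧ ∀ j' < j, ¬ c ≤ b j' :=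
    ⟨Nat.find hex, Nat.find_spec hex, fun j' h => Nat.find_min hex h⟩
  have hjle : j ≤ l := by
    by_contra hgt
    exact hjmin l (by omega) (by rw [hbn]; exact h2)
  have hj1 : 1 ≤ j := by
    rcases Nat.eq_zero_or_pos j with h | h
    · rw [h, hb0] at hjs; omega
    · exact h
  have hjm : ¬ c ≤ b (j - 1) := hjmin (j - 1) (by omega)
  have hcb : c < b j := lt_of_le_of_ne hjs (hne j (Finset.mem_Icc.2 ⟨hj1, hjle⟩))
  have hmono : b j ≤ b l := by
    rw [hb, hb]
    exact Finset.sum_le_sum_of_subset (Finset.Icc_subset_Icc_right hjle)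
  refine ⟨by omega, ?_⟩
  rw [hy j hj1 hjle c (by omega) (by omega), hy j hj1 hjle (c + 1) (by omega) (by omega)]

lemma main_case (x y : ℕ → ℝ) (m n L : ℕ) (p : ℕ → ℕ × ℕ)
    (hp : IsWarpingPath m n L p) (ℓ : ℕ) (hℓ : ℓ + 1 < L)
    (hcn : (p ℓ).2 < n) (hyc : y (p ℓ).2 = y ((p ℓ).2 + 1))
    (hH1 : (p (ℓ + 1)).1 = (p ℓ).1 + 1) (hH2 : (p (ℓ + 1)).2 = (p ℓ).2) :
    (∃ q, IsWarpingPath m n (L - 1) q ∧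
      pathCost x y (L - 1) q ≤ pathCost x y L p) ∨
    (∃ q, IsWarpingPath m n L q ∧ pathCost x y L q = pathCost x y L p ∧
      ∑ s ∈ Finset.range L, ((q s).1 + (q s).2)
        = (∑ s ∈ Finset.range L, ((p s).1 + (p s).2)) + 1) := by
  classical
  obtain ⟨hL1, h0, hend, hbnd, hstp⟩ := hp
  have hex : ∃ s, ℓ < s ∧ s < L ∧ (p s).2 ≠ (p ℓ).2 := by
    refine ⟨L - 1, by omega, by omega, ?_⟩
    rw [hend]
    show n ≠ (p ℓ).2
    omega
  obtain ⟨u, hu1, hu2, hu3, humin⟩ :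
      ∃ u, ℓ < u ∧ u < L ∧ (p u).2 ≠ (p ℓ).2 ∧
        ∀ s < u, ¬(ℓ < s ∧ s < L ∧ (p s).2 ≠ (p ℓ).2) :=
    ⟨Nat.find hex, (Nat.find_spec hex).1, (Nat.find_spec hex).2.1,
      (Nat.find_spec hex).2.2, fun s h => Nat.find_min hex h⟩
  have huℓ : ℓ + 2 ≤ u := by
    rcases Nat.lt_or_ge (ℓ + 1) u with h | h
    · omega
    · have : u = ℓ + 1 := by omega
      rw [this, hH2] at hu3
      exact absurd rfl hu3
  have hrun : ∀ s, ℓ ≤ s → s < u → (p s).2 = (p ℓ).2 := by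
    intro s hs1 hs2
    rcases eq_or_lt_of_le hs1 with h | h
    · rw [← h]
    · by_contra hne
      exact humin s hs2 ⟨h, by omega, hne⟩
  have hc1 : (p (u - 1)).2 = (p ℓ).2 := hrun _ (by omega) (by omega)
  have hc2 : (p (u - 2)).2 = (p ℓ).2 := hrun _ (by omega) (by omega)
  have hs2 := hstp (u - 2) (by omega)
  rw [show u - 2 + 1 = u - 1 by omega] at hs2
  have hA : (p (u - 1)).1 = (p (u - 2)).1 + 1 := by
    rcases hs2 with ⟨hA', hB'⟩ | ⟨hA', hB'⟩ | ⟨hA', hB'⟩ <;> omega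
  have hs1 := hstp (u - 1) (by omega)
  rw [show u - 1 + 1 = u by omega] at hs1
  have hcu : (p u).2 = (p ℓ).2 + 1 := by
    rcases hs1 with ⟨hA', hB'⟩ | ⟨hA', hB'⟩ | ⟨hA', hB'⟩ <;> omega
  by_cases hδ : (p u).1 = (p (u - 1)).1
  · -- delete the point u-1 : path gets shorter, cost does not increase
    left
    refine ⟨fun s => if s < u - 1 then p s else p (s + 1),
      ⟨by omega, ?_, ?_, ?_, ?_⟩, ?_⟩
    · dsimp only
      rw [if_pos (show 0 < u - 1 by omega)]
      exact h0
    · dsimp only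
      rw [if_neg (show ¬ (L - 1 - 1 < u - 1) by omega),
        show L - 1 - 1 + 1 = L - 1 by omega]
      exact hend
    · intro s hs
      dsimp only
      split
      · exact hbnd s (by omega)
      · exact hbnd (s + 1) (by omega)
    · intro s hs
      dsimp only
      rcases lt_trichotomy (s + 1) (u - 1) with h | h | h
      · rw [if_pos h, if_pos (show s < u - 1 by omega)]
        exact hstp s (by omega)
      · have hse : s = u - 2 := by omega
        subst hse
        rw [if_pos (by omega : u - 2 < u - 1), if_neg (by omega : ¬ u - 2 + 1 < u - 1),
          show u - 2 + 1 + 1 = u by omega]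
        right; right
        constructor <;> omega
      · rw [if_neg (by omega), if_neg (by omega)]
        exact hstp (s + 1) (by omega)
    · -- cost
      unfold pathCost
      have key : ∑ s ∈ Finset.range (L - 1),
          (x ((fun s => if s < u - 1 then p s else p (s + 1)) s).1
            - y ((fun s => if s < u - 1 then p s else p (s + 1)) s).2) ^ 2
          + (x (p (u - 1)).1 - y (p (u - 1)).2) ^ 2
          = ∑ s ∈ Finset.range L, (x (p s).1 - y (p s).2) ^ 2 := by
        have e1 : ∑ s ∈ Finset.range (L - 1),
            (x ((fun s => if s < u - 1 then p s else p (s + 1)) s).1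
              - y ((fun s => if s < u - 1 then p s else p (s + 1)) s).2) ^ 2
            = ∑ s ∈ Finset.range (u - 1), (x (p s).1 - y (p s).2) ^ 2
              + ∑ s ∈ Finset.Ico (u - 1) (L - 1), (x (p (s + 1)).1 - y (p (s + 1)).2) ^ 2 := by
          rw [Finset.range_eq_Ico,
            ← Finset.sum_Ico_consecutive _ (show 0 ≤ u - 1 by omega) (show u - 1 ≤ L - 1 by omega),
            ← Finset.range_eq_Ico]
          congr 1
          · apply Finset.sum_congr rfl
            intro s hs
            rw [Finset.mem_range] at hs
            dsimp only
            rw [if_pos hs]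
          · apply Finset.sum_congr rfl
            intro s hs
            rw [Finset.mem_Ico] at hs
            dsimp only
            rw [if_neg (by omega)]
        have e2 : ∑ s ∈ Finset.Ico (u - 1) (L - 1), (x (p (s + 1)).1 - y (p (s + 1)).2) ^ 2
            = ∑ s ∈ Finset.Ico u L, (x (p s).1 - y (p s).2) ^ 2 := by
          rw [Finset.sum_Ico_eq_sum_range, Finset.sum_Ico_eq_sum_range]
          apply Finset.sum_congr (by congr 1; omega)
          intro i _
          rw [show u - 1 + i + 1 = u + i by omega]
        have e3 : ∑ s ∈ Finset.range L, (x (p s).1 - y (p s).2) ^ 2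
            = (∑ s ∈ Finset.range (u - 1), (x (p s).1 - y (p s).2) ^ 2
                + (x (p (u - 1)).1 - y (p (u - 1)).2) ^ 2)
              + ∑ s ∈ Finset.Ico u L, (x (p s).1 - y (p s).2) ^ 2 := by
          rw [← Finset.sum_range_succ, show u - 1 + 1 = u by omega, Finset.range_eq_Ico, Finset.range_eq_Ico,
            Finset.sum_Ico_consecutive _ (show 0 ≤ u by omega) (le_of_lt hu2),
            ← Finset.range_eq_Ico]
        rw [e1, e2, e3]
        ring
      have hnn : 0 ≤ (x (p (u - 1)).1 - y (p (u - 1)).2) ^ 2 := sq_nonneg _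
      linarith [key]
  · -- modify the point u-1 : same length, same cost, weight + 1
    right
    have hδ1 : (p u).1 = (p (u - 1)).1 + 1 := by
      rcases hs1 with ⟨hA', hB'⟩ | ⟨hA', hB'⟩ | ⟨hA', hB'⟩ <;> omega
    refine ⟨fun s => if s = u - 1 then ((p (u - 1)).1, (p ℓ).2 + 1) else p s,
      ⟨hL1, ?_, ?_, ?_, ?_⟩, ?_, ?_⟩
    · dsimp only
      rw [if_neg (show (0 : ℕ) ≠ u - 1 by omega)]
      exact h0
    · dsimp only
      rw [if_neg (show L - 1 ≠ u - 1 by omega)]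
      exact hend
    · intro s hs
      dsimp only
      split
      · have hb := hbnd (u - 1) (by omega)
        exact ⟨hb.1, hb.2.1, by omega, by omega⟩
      · exact hbnd s hs
    · intro s hs
      dsimp only
      rcases eq_or_ne (s + 1) (u - 1) with h | h
      · have hse : s = u - 2 := by omega
        subst hse
        rw [if_neg (show u - 2 ≠ u - 1 by omega), if_pos h]
        right; right
        constructor <;> dsimp only <;> omega
      · rcases eq_or_ne s (u - 1) with h' | h'
        · subst h'
          rw [if_pos rfl, if_neg (show u - 1 + 1 ≠ u - 1 by omega),
            show u - 1 + 1 = u by omega]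
          left
          constructor <;> dsimp only <;> omega
        · rw [if_neg h', if_neg h]
          exact hstp s hs
    · -- cost unchanged
      unfold pathCost
      apply Finset.sum_congr rfl
      intro s _
      dsimp only
      rcases eq_or_ne s (u - 1) with h | h
      · subst h
        rw [if_pos rfl]
        dsimp only
        rw [hc1, ← hyc]
      · rw [if_neg h]
    · -- weight + 1
      have hterm : ∀ s, ((if s = u - 1 then ((p (u - 1)).1, (p ℓ).2 + 1) else p s).1
            + (if s = u - 1 then ((p (u - 1)).1, (p ℓ).2 + 1) else p s).2)
          = ((p s).1 + (p s).2) + (if s = u - 1 then 1 else 0) := by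
        intro s
        rcases eq_or_ne s (u - 1) with h | h
        · subst h
          rw [if_pos rfl, if_pos rfl]
          dsimp only
          omega
        · rw [if_neg h, if_neg h]
          omega
      calc ∑ s ∈ Finset.range L, ((if s = u - 1 then ((p (u - 1)).1, (p ℓ).2 + 1) else p s).1
            + (if s = u - 1 then ((p (u - 1)).1, (p ℓ).2 + 1) else p s).2)
          = ∑ s ∈ Finset.range L, (((p s).1 + (p s).2) + (if s = u - 1 then 1 else 0)) :=
            Finset.sum_congr rfl (fun s _ => hterm s)
        _ = (∑ s ∈ Finset.range L, ((p s).1 + (p s).2)) + 1 := by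
            rw [Finset.sum_add_distrib, Finset.sum_ite_eq' (Finset.range L) (u - 1) (fun _ => 1),
              if_pos (Finset.mem_range.2 (by omega))]

/-- Let `x` and `y` have run-length encodings with run values `xt i` / `yt j`,
run lengths `mr i` / `nr j`, and prefix sums `a i` / `b j` (so the DTW matrix
is structured into blocks with constant local cost). There exists an optimal
warping path `p` such that whenever the current point lies strictly inside a
block (its row is no top boundary `a i` and its column is no right boundary
`b j`), the next step of `p` is diagonal. -/
theorem exists_optimal_blockwise_diagonal
    (k l m n : ℕ) (hk : 1 ≤ k) (hl : 1 ≤ l)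
    (mr nr : ℕ → ℕ) (hmr : ∀ i ∈ Icc 1 k, 1 ≤ mr i) (hnr : ∀ j ∈ Icc 1 l, 1 ≤ nr j)
    (a b : ℕ → ℕ)
    (ha : ∀ i, a i = ∑ r ∈ Icc 1 i, mr r) (hb : ∀ j, b j = ∑ s ∈ Icc 1 j, nr s)
    (ham : a k = m) (hbn : b l = n)
    (x y : ℕ → ℝ) (xt yt : ℕ → ℝ)
    (hx : ∀ i, 1 ≤ i → i ≤ k → ∀ q, a (i - 1) < q → q ≤ a i → x q = xt i)
    (hy : ∀ j, 1 ≤ j → j ≤ l → ∀ q, b (j - 1) < q → q ≤ b j → y q = yt j) :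
    ∃ L p, IsWarpingPath m n L p ∧ pathCost x y L p = dtwSq x y m n ∧
      ∀ ℓ, ℓ + 1 < L →
        ((∀ i ∈ Icc 1 k, (p ℓ).1 ≠ a i) ∧ (∀ j ∈ Icc 1 l, (p ℓ).2 ≠ b j)) →
        (p (ℓ + 1)).1 = (p ℓ).1 + 1 ∧ (p (ℓ + 1)).2 = (p ℓ).2 + 1 := by
  classical
  have hm : 1 ≤ m := by
    have h1 : (Finset.Icc 1 k).card • 1 ≤ ∑ r ∈ Finset.Icc 1 k, mr r :=
      Finset.card_nsmul_le_sum _ _ _ hmr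
    have h2 : a k = ∑ r ∈ Finset.Icc 1 k, mr r := ha k
    simp [Nat.card_Icc] at h1
    omega
  have hn : 1 ≤ n := by
    have h1 : (Finset.Icc 1 l).card • 1 ≤ ∑ r ∈ Finset.Icc 1 l, nr r :=
      Finset.card_nsmul_le_sum _ _ _ hnr
    have h2 : b l = ∑ r ∈ Finset.Icc 1 l, nr r := hb l
    simp [Nat.card_Icc] at h1
    omega
  have hbdd : BddBelow {c : ℝ | ∃ L p, IsWarpingPath m n L p ∧ c = pathCost x y L p} := by
    refine ⟨0, ?_⟩
    rintro c ⟨L, p, hp, rfl⟩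
    unfold pathCost
    positivity
  have hdt : dtwSq x y m n
      = sInf {c : ℝ | ∃ L p, IsWarpingPath m n L p ∧ c = pathCost x y L p} := rfl
  have hP : ∃ L, ∃ p, IsWarpingPath m n L p ∧ pathCost x y L p = dtwSq x y m n :=
    dtw_attained x y m n hm hn
  obtain ⟨L₀, ⟨p₁, hp₁, hc₁⟩, hLmin⟩ :
      ∃ L₀, (∃ p, IsWarpingPath m n L₀ p ∧ pathCost x y L₀ p = dtwSq x y m n) ∧
        ∀ L' < L₀, ¬ ∃ p, IsWarpingPath m n L' p ∧ pathCost x y L' p = dtwSq x y m n :=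
    ⟨Nat.find hP, Nat.find_spec hP, fun L' h => Nat.find_min hP h⟩
  have hwb : ∀ q : ℕ → ℕ × ℕ, IsWarpingPath m n L₀ q →
      ∑ s ∈ Finset.range L₀, ((q s).1 + (q s).2) ≤ L₀ * (m + n) := by
    intro q hq
    calc ∑ s ∈ Finset.range L₀, ((q s).1 + (q s).2)
        ≤ ∑ _s ∈ Finset.range L₀, (m + n) := by
          apply Finset.sum_le_sum
          intro s hs
          have := hq.2.2.2.1 s (Finset.mem_range.1 hs)
          omega
      _ = L₀ * (m + n) := by
          rw [Finset.sum_const, Finset.card_range, smul_eq_mul]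
  have hQ : ∃ w, ∃ p, IsWarpingPath m n L₀ p ∧ pathCost x y L₀ p = dtwSq x y m n ∧
      ∑ s ∈ Finset.range L₀, ((p s).1 + (p s).2) = w :=
    ⟨_, p₁, hp₁, hc₁, rfl⟩
  obtain ⟨w₀, ⟨p, hp, hcost, hwt⟩, hwmax⟩ :
      ∃ w₀, (∃ p, IsWarpingPath m n L₀ p ∧ pathCost x y L₀ p = dtwSq x y m n ∧
          ∑ s ∈ Finset.range L₀, ((p s).1 + (p s).2) = w₀) ∧
        ∀ w', w₀ < w' → w' ≤ L₀ * (m + n) →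
          ¬ ∃ p, IsWarpingPath m n L₀ p ∧ pathCost x y L₀ p = dtwSq x y m n ∧
            ∑ s ∈ Finset.range L₀, ((p s).1 + (p s).2) = w' := by
    obtain ⟨w', pw, hpw, hcw, hww⟩ := hQ
    set P' : ℕ → Prop := fun w => ∃ p, IsWarpingPath m n L₀ p ∧
      pathCost x y L₀ p = dtwSq x y m n ∧
      ∑ s ∈ Finset.range L₀, ((p s).1 + (p s).2) = w with hP'def
    have hPw : P' w' := ⟨pw, hpw, hcw, hww⟩
    refine ⟨Nat.findGreatest P' (L₀ * (m + n)), ?_, ?_⟩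
    · exact Nat.findGreatest_spec (hww ▸ hwb pw hpw) hPw
    · intro w'' h1 h2
      exact Nat.findGreatest_is_greatest h1 h2
  have contra_short : ∀ L' q, L' < L₀ → IsWarpingPath m n L' q →
      pathCost x y L' q ≤ dtwSq x y m n → False := by
    intro L' q hlt hq hle
    have hmem : pathCost x y L' q ∈
        {c : ℝ | ∃ L p, IsWarpingPath m n L p ∧ c = pathCost x y L p} := ⟨L', q, hq, rfl⟩
    have hge : dtwSq x y m n ≤ pathCost x y L' q := by
      rw [hdt]
      exact csInf_le hbdd hmem
    exact hLmin L' hlt ⟨q, hq, le_antisymm hle hge⟩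
  have contra_weight : ∀ q, IsWarpingPath m n L₀ q → pathCost x y L₀ q = dtwSq x y m n →
      ∑ s ∈ Finset.range L₀, ((q s).1 + (q s).2) = w₀ + 1 → False := by
    intro q hq hqc hqw
    exact hwmax (w₀ + 1) (by omega) (hqw ▸ hwb q hq) ⟨q, hq, hqc, hqw⟩
  refine ⟨L₀, p, hp, hcost, ?_⟩
  intro ℓ hℓ hint
  by_contra hnd
  have hbnd := hp.2.2.2.1
  have hstp := hp.2.2.2.2
  have hbℓ := hbnd ℓ (by omega)
  rcases hstp ℓ hℓ with ⟨h1, h2⟩ | ⟨h1, h2⟩ | hD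
  · -- horizontal step
    obtain ⟨hcn, hyc⟩ := const_of_interior l n nr b hb hbn y yt hy (p ℓ).2
      hbℓ.2.2.1 hbℓ.2.2.2 hint.2
    rcases main_case x y m n L₀ p hp ℓ hℓ hcn hyc h1 h2 with
      ⟨q, hq, hle⟩ | ⟨q, hq, hqc, hqw⟩
    · exact contra_short (L₀ - 1) q (by omega) hq (hle.trans (le_of_eq hcost))
    · exact contra_weight q hq (hqc.trans hcost) (by rw [hqw, hwt])
  · -- vertical step : apply main_case to the swapped path
    obtain ⟨hrm, hxc⟩ := const_of_interior k m mr a ha ham x xt hx (p ℓ).1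
      hbℓ.1 hbℓ.2.1 hint.1
    have hp' := swap_wp hp
    rcases main_case y x n m L₀ (fun s => ((p s).2, (p s).1)) hp' ℓ hℓ
      (by dsimp only; exact hrm) (by dsimp only; exact hxc)
      (by dsimp only; exact h2) (by dsimp only; exact h1) with
      ⟨q', hq', hle⟩ | ⟨q', hq', hqc, hqw⟩
    · refine contra_short (L₀ - 1) (fun s => ((q' s).2, (q' s).1)) (by omega)
        (swap_wp hq') ?_
      rw [swap_cost]
      calc pathCost y x (L₀ - 1) q' ≤ pathCost y x L₀ (fun s => ((p s).2, (p s).1)) := hle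
        _ = pathCost x y L₀ p := swap_cost x y L₀ p
        _ = dtwSq x y m n := hcost
    · refine contra_weight (fun s => ((q' s).2, (q' s).1)) (swap_wp hq') ?_ ?_
      · rw [swap_cost]
        calc pathCost y x L₀ q' = pathCost y x L₀ (fun s => ((p s).2, (p s).1)) := hqc
          _ = pathCost x y L₀ p := swap_cost x y L₀ p
          _ = dtwSq x y m n := hcost
      · rw [swap_weight]
        rw [hqw, swap_weight, hwt]
  · exact hnd hD
end

section
/- Let x and y be time series with blocks B_{i,j} as determined by their run-length encodings, and let 𝓛 be the set of block diagonals, i.e., diagonals of the DTW grid passing through some upper-right block corner (a_i, b_j), i ∈ [k], j ∈ [ℓ], together with the diagonal through (1,1). Then there exists an optimal warping path that is diagonal-conform: each of its maximal diagonal subpaths lies on a diagonal in 𝓛, and each of its maximal horizontal (resp. vertical) subpaths lies on a top boundary row a_i (resp. right boundary column b_j) of some block. -/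
open Finset

namespace DTWAux

/-- generic single step relation -/
def Stp (q r : ℕ × ℕ) : Prop :=
  (r.1 = q.1 + 1 ∧ r.2 = q.2) ∨ (r.1 = q.1 ∧ r.2 = q.2 + 1) ∨
    (r.1 = q.1 + 1 ∧ r.2 = q.2 + 1)

theorem isWP_iff (m n L : ℕ) (p : ℕ → ℕ × ℕ) :
    IsWarpingPath m n L p ↔
      1 ≤ L ∧ p 0 = (1, 1) ∧ p (L - 1) = (m, n) ∧
      (∀ ℓ < L, 1 ≤ (p ℓ).1 ∧ (p ℓ).1 ≤ m ∧ 1 ≤ (p ℓ).2 ∧ (p ℓ).2 ≤ n) ∧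
      ∀ ℓ, ℓ + 1 < L → Stp (p ℓ) (p (ℓ + 1)) := Iff.rfl

/-- sum of coordinates grows at least linearly: length bound -/
theorem len_le (m n L : ℕ) (p : ℕ → ℕ × ℕ) (hp : IsWarpingPath m n L p) :
    L ≤ m + n := by
  obtain ⟨hL, h0, hE, hB, hS⟩ := hp
  have key : ∀ ℓ, ℓ < L → ℓ + 2 ≤ (p ℓ).1 + (p ℓ).2 := by
    intro ℓ
    induction ℓ with
    | zero => intro _; simp [h0]
    | succ t ih =>
      intro h
      have ht : t < L := by omega
      have := ih (by omega)
      rcases hS t (by omega) with ⟨h1, h2⟩ | ⟨h1, h2⟩ | ⟨h1, h2⟩ <;> omega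
  have := key (L - 1) (by omega)
  have h1 : (p (L-1)).1 = m := by rw [hE]
  have h2 : (p (L-1)).2 = n := by rw [hE]
  omega

theorem cost_nonneg (x y : ℕ → ℝ) (L : ℕ) (p : ℕ → ℕ × ℕ) :
    0 ≤ pathCost x y L p :=
  Finset.sum_nonneg fun _ _ => sq_nonneg _

/-- the set of achievable costs -/
def CostSet (x y : ℕ → ℝ) (m n : ℕ) : Set ℝ :=
  {c : ℝ | ∃ L p, IsWarpingPath m n L p ∧ c = pathCost x y L p}

theorem costSet_bddBelow (x y : ℕ → ℝ) (m n : ℕ) : BddBelow (CostSet x y m n) :=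
  ⟨0, fun c hc => by obtain ⟨L, p, _, rfl⟩ := hc; exact cost_nonneg x y L p⟩

theorem costSet_nonempty (x y : ℕ → ℝ) (m n : ℕ) (hm : 1 ≤ m) (hn : 1 ≤ n) :
    (CostSet x y m n).Nonempty := by
  refine ⟨_, m + n - 1, (fun ℓ => if ℓ + 1 ≤ m then (ℓ + 1, 1) else (m, ℓ + 2 - m)), ?_, rfl⟩
  refine ⟨by omega, by simp [hm], ?_, ?_, ?_⟩
  · have : ¬ (m + n - 1 - 1 + 1 ≤ m) ∨ (n = 1) := by omega
    rcases this with h | h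
    · simp only [if_neg (by omega : ¬ (m + n - 1 - 1 + 1 ≤ m))]
      have : m + n - 1 - 1 + 2 - m = n := by omega
      rw [this]
    · subst h
      simp only [if_pos (by omega : m + 1 - 1 - 1 + 1 ≤ m)]
      have : m + 1 - 1 - 1 + 1 = m := by omega
      rw [this]
  · intro ℓ hℓ
    by_cases h : ℓ + 1 ≤ m <;> simp [h] <;> omega
  · intro ℓ hℓ
    by_cases h1 : ℓ + 1 + 1 ≤ m
    · simp [h1, (by omega : ℓ + 1 ≤ m)]
    · by_cases h2 : ℓ + 1 ≤ m
      · simp [h1, h2]; omega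
      · simp [h1, h2]; omega

theorem costSet_finite (x y : ℕ → ℝ) (m n : ℕ) : (CostSet x y m n).Finite := by
  classical
  set C : Finset ℝ :=
    insert 0 (((Finset.Icc 1 m) ×ˢ (Finset.Icc 1 n)).image
      (fun uv => (x uv.1 - y uv.2) ^ 2)) with hC
  have hfin : (Set.pi (Set.univ : Set (Fin (m+n))) fun _ => (↑C : Set ℝ)).Finite :=
    Set.Finite.pi fun _ => C.finite_toSet
  have himg : (CostSet x y m n) ⊆
      (fun h : Fin (m+n) → ℝ => ∑ i, h i) '' (Set.pi Set.univ fun _ => (↑C : Set ℝ)) := by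
    rintro c ⟨L, p, hp, rfl⟩
    have hLle : L ≤ m + n := len_le m n L p hp
    refine ⟨fun i => if (i : ℕ) < L then (x (p i).1 - y (p i).2) ^ 2 else 0, ?_, ?_⟩
    · intro i _
      by_cases h : (i : ℕ) < L
      · simp only [if_pos h]
        have hb := hp.2.2.2.1 i h
        exact Finset.mem_coe.2 (Finset.mem_insert_of_mem
          (Finset.mem_image.2 ⟨((p i).1, (p i).2), by
            simp [Finset.mem_Icc]; omega, rfl⟩))
      · simp [h, hC]
    · show (∑ i : Fin (m+n), if (i:ℕ) < L then (x (p i).1 - y (p i).2) ^ 2 else 0) = _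
      rw [Fin.sum_univ_eq_sum_range (fun i => if i < L then (x (p i).1 - y (p i).2) ^ 2 else 0)]
      rw [pathCost]
      rw [← Finset.sum_subset (Finset.range_subset_range.2 hLle)]
      · exact Finset.sum_congr rfl fun ℓ hℓ => if_pos (Finset.mem_range.1 hℓ)
      · intro ℓ _ hℓ
        rw [if_neg (by simp only [Finset.mem_range] at hℓ; omega)]
  exact Set.Finite.subset (hfin.image _) himg

end DTWAux

namespace DTWAux

open Finset

/-- block constancy: if `v` is not a block boundary then `f (v+1) = f v`. -/
theorem step_const (K N : ℕ) (arr : ℕ → ℕ) (f : ℕ → ℝ) (ft : ℕ → ℝ) (hK : 1 ≤ K)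
    (h0 : arr 0 = 0) (hN : arr K = N)
    (hf : ∀ i, 1 ≤ i → i ≤ K → ∀ q, arr (i-1) < q → q ≤ arr i → f q = ft i)
    (v : ℕ) (hv1 : 1 ≤ v) (hv2 : v + 1 ≤ N)
    (hnot : ∀ i, 1 ≤ i → i ≤ K → v ≠ arr i) : f (v+1) = f v := by
  classical
  have hex : ∃ j, v ≤ arr j := ⟨K, by omega⟩
  set j := Nat.find hex with hj
  have hjP : v ≤ arr j := Nat.find_spec hex
  have hjK : j ≤ K := Nat.find_min' hex (by omega)
  have hj1 : 1 ≤ j := by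
    rcases Nat.eq_zero_or_pos j with h | h
    · exfalso; rw [h] at hjP; omega
    · exact h
  have hprev : arr (j-1) < v := by
    have := Nat.find_min hex (show j - 1 < j by omega)
    omega
  have hne : v ≠ arr j := hnot j hj1 hjK
  have h1 : f (v+1) = ft j := hf j hj1 hjK (v+1) (by omega) (by omega)
  have h2 : f v = ft j := hf j hj1 hjK v hprev (by omega)
  rw [h1, h2]

/-- existence of an optimal warping path -/
theorem exists_opt (x y : ℕ → ℝ) (m n : ℕ) (hm : 1 ≤ m) (hn : 1 ≤ n) :
    ∃ L p, IsWarpingPath m n L p ∧ pathCost x y L p = dtwSq x y m n := by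
  have h := Set.Nonempty.csInf_mem (costSet_nonempty x y m n hm hn) (costSet_finite x y m n)
  obtain ⟨L, p, hp, hc⟩ := h
  exact ⟨L, p, hp, hc.symm⟩

theorem dtw_le (x y : ℕ → ℝ) (m n : ℕ) (L : ℕ) (p : ℕ → ℕ × ℕ)
    (hp : IsWarpingPath m n L p) : dtwSq x y m n ≤ pathCost x y L p :=
  csInf_le (costSet_bddBelow x y m n) ⟨L, p, hp, rfl⟩

def phi (L : ℕ) (p : ℕ → ℕ × ℕ) : ℕ := ∑ ℓ ∈ Finset.range L, ((p ℓ).1 + (p ℓ).2)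

/-- existence of an extremal optimal warping path -/
theorem exists_extremal (x y : ℕ → ℝ) (m n : ℕ) (hm : 1 ≤ m) (hn : 1 ≤ n) :
    ∃ L p, IsWarpingPath m n L p ∧ pathCost x y L p = dtwSq x y m n ∧
      (∀ L' p', IsWarpingPath m n L' p' → pathCost x y L' p' = dtwSq x y m n → L ≤ L') ∧
      (∀ p', IsWarpingPath m n L p' → pathCost x y L p' = dtwSq x y m n →
        phi L p' ≤ phi L p) := by
  classical
  have hopt := exists_opt x y m n hm hn
  have hTne : {L | ∃ p, IsWarpingPath m n L p ∧ pathCost x y L p = dtwSq x y m n}.Nonempty := by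
    obtain ⟨L, p, h1, h2⟩ := hopt; exact ⟨L, p, h1, h2⟩
  set L0 := sInf {L | ∃ p, IsWarpingPath m n L p ∧ pathCost x y L p = dtwSq x y m n} with hL0
  have hL0mem := Nat.sInf_mem hTne
  obtain ⟨p0, hp0, hc0⟩ := hL0mem
  have hUne : {f | ∃ p, IsWarpingPath m n L0 p ∧ pathCost x y L0 p = dtwSq x y m n ∧
      phi L0 p = f}.Nonempty := ⟨phi L0 p0, p0, hp0, hc0, rfl⟩
  have hUbdd : BddAbove {f | ∃ p, IsWarpingPath m n L0 p ∧ pathCost x y L0 p = dtwSq x y m n ∧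
      phi L0 p = f} := by
    refine ⟨L0 * (m + n), ?_⟩
    rintro f ⟨p, hp, _, rfl⟩
    calc phi L0 p ≤ ∑ _ℓ ∈ Finset.range L0, (m + n) := by
          apply Finset.sum_le_sum
          intro ℓ hℓ
          have := hp.2.2.2.1 ℓ (Finset.mem_range.1 hℓ)
          omega
      _ = L0 * (m + n) := by rw [Finset.sum_const, Finset.card_range, smul_eq_mul]
  have hUmem := Nat.sSup_mem hUne hUbdd
  obtain ⟨p1, hp1, hc1, hphi1⟩ := hUmem
  refine ⟨L0, p1, hp1, hc1, ?_, ?_⟩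
  · intro L' p' h1 h2
    exact Nat.sInf_le ⟨p', h1, h2⟩
  · intro p' h1 h2
    rw [hphi1]
    exact le_csSup hUbdd ⟨p', h1, h2, rfl⟩

/-! ## The splice operation -/

def spl (p : ℕ → ℕ × ℕ) (s w w' : ℕ) (g : ℕ → ℕ × ℕ) : ℕ → ℕ × ℕ :=
  fun τ => if τ < s then p τ else if τ < s + w' then g (τ - s) else p (τ + w - w')

theorem splice (m n : ℕ) (L : ℕ) (p : ℕ → ℕ × ℕ) (hp : IsWarpingPath m n L p)
    (s w w' : ℕ) (g : ℕ → ℕ × ℕ)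
    (hw : 1 ≤ w) (hw' : 1 ≤ w') (hsw : s + w ≤ L - 1)
    (hgB : ∀ i < w', 1 ≤ (g i).1 ∧ (g i).1 ≤ m ∧ 1 ≤ (g i).2 ∧ (g i).2 ≤ n)
    (hgS : ∀ i, i + 1 < w' → Stp (g i) (g (i+1)))
    (hj1 : (1 ≤ s ∧ Stp (p (s-1)) (g 0)) ∨ (s = 0 ∧ g 0 = (1,1)))
    (hj2 : Stp (g (w'-1)) (p (s+w))) :
    IsWarpingPath m n (L + w' - w) (spl p s w w' g) ∧
    ∀ (M : Type) (_ : AddCommMonoid M) (F : ℕ × ℕ → M),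
      (∑ τ ∈ Finset.range (L + w' - w), F (spl p s w w' g τ)) +
        ∑ τ ∈ Finset.Ico s (s+w), F (p τ)
      = (∑ τ ∈ Finset.range L, F (p τ)) + ∑ i ∈ Finset.range w', F (g i) := by
  obtain ⟨hL1, h0, hE, hB, hS⟩ := hp
  have hL : w + 1 ≤ L := by omega
  constructor
  · refine ⟨by omega, ?_, ?_, ?_, ?_⟩
    · rcases hj1 with ⟨hs, _⟩ | ⟨hs, hg⟩
      · show spl p s w w' g 0 = (1,1)
        rw [spl, if_pos (by omega)]; exact h0
      · show spl p s w w' g 0 = (1,1)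
        rw [spl, if_neg (by omega), if_pos (by omega)]
        simpa [hs] using hg
    · show spl p s w w' g (L + w' - w - 1) = (m, n)
      rw [spl, if_neg (by omega), if_neg (by omega)]
      have : L + w' - w - 1 + w - w' = L - 1 := by omega
      rw [this]; exact hE
    · intro τ hτ
      show 1 ≤ (spl p s w w' g τ).1 ∧ _
      rw [spl]
      split
      · exact hB τ (by omega)
      · split
        · exact hgB _ (by omega)
        · exact hB _ (by omega)
    · intro τ hτ
      show Stp (spl p s w w' g τ) (spl p s w w' g (τ+1))
      rcases Nat.lt_or_ge (τ+1) s with h1 | h1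
      · show Stp (if _ then _ else _) (if _ then _ else _)
        rw [if_pos (by omega : τ < s), if_pos (by omega : τ + 1 < s)]
        exact hS τ (by omega)
      rcases Nat.eq_or_lt_of_le h1 with h2 | h2
      · -- τ + 1 = s
        show Stp (if _ then _ else _) (if _ then _ else _)
        rw [if_pos (by omega : τ < s), if_neg (by omega : ¬ (τ+1) < s),
          if_pos (by omega : τ + 1 < s + w')]
        rcases hj1 with ⟨_, hstep⟩ | ⟨hs, _⟩
        · have e2 : τ + 1 - s = 0 := by omega
          rw [e2]
          have e1 : τ = s - 1 := by omega
          rw [e1]; exact hstep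
        · omega
      rcases Nat.lt_or_ge (τ+1) (s + w') with h3 | h3
      · show Stp (if _ then _ else _) (if _ then _ else _)
        rw [if_neg (by omega : ¬ τ < s), if_pos (by omega : τ < s + w'),
          if_neg (by omega : ¬ (τ+1) < s), if_pos h3]
        have : τ + 1 - s = (τ - s) + 1 := by omega
        rw [this]
        exact hgS _ (by omega)
      rcases Nat.eq_or_lt_of_le h3 with h4 | h4
      · -- τ + 1 = s + w'
        show Stp (if _ then _ else _) (if _ then _ else _)
        rw [if_neg (by omega : ¬ τ < s), if_pos (by omega : τ < s + w'),
          if_neg (by omega : ¬ (τ+1) < s), if_neg (by omega : ¬ (τ+1) < s + w')]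
        have e1 : τ - s = w' - 1 := by omega
        have e2 : τ + 1 + w - w' = s + w := by omega
        rw [e1, e2]; exact hj2
      · show Stp (if _ then _ else _) (if _ then _ else _)
        rw [if_neg (by omega : ¬ τ < s), if_neg (by omega : ¬ τ < s + w'),
          if_neg (by omega : ¬ (τ+1) < s), if_neg (by omega : ¬ (τ+1) < s + w')]
        have e2 : τ + 1 + w - w' = (τ + w - w') + 1 := by omega
        rw [e2]
        exact hS _ (by omega)
  · intro M hM F
    have hsplit : ∑ τ ∈ Finset.range (L + w' - w), F (spl p s w w' g τ)
        = (∑ τ ∈ Finset.Ico 0 s, F (spl p s w w' g τ))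
          + (∑ τ ∈ Finset.Ico s (s + w'), F (spl p s w w' g τ))
          + (∑ τ ∈ Finset.Ico (s + w') (L + w' - w), F (spl p s w w' g τ)) := by
      rw [Finset.sum_Ico_consecutive _ (by omega : 0 ≤ s) (by omega : s ≤ s + w')]
      rw [Finset.sum_Ico_consecutive _ (by omega : (0:ℕ) ≤ s + w') (by omega : s + w' ≤ L + w' - w)]
      rw [← Finset.range_eq_Ico]
    have hsplit2 : ∑ τ ∈ Finset.range L, F (p τ)
        = (∑ τ ∈ Finset.Ico 0 s, F (p τ)) + (∑ τ ∈ Finset.Ico s (s + w), F (p τ))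
          + (∑ τ ∈ Finset.Ico (s + w) L, F (p τ)) := by
      rw [Finset.sum_Ico_consecutive _ (by omega : 0 ≤ s) (by omega : s ≤ s + w)]
      rw [Finset.sum_Ico_consecutive _ (by omega : (0:ℕ) ≤ s + w) (by omega : s + w ≤ L)]
      rw [← Finset.range_eq_Ico]
    have e1 : ∑ τ ∈ Finset.Ico 0 s, F (spl p s w w' g τ) = ∑ τ ∈ Finset.Ico 0 s, F (p τ) := by
      apply Finset.sum_congr rfl
      intro τ hτ
      rw [Finset.mem_Ico] at hτ
      rw [spl, if_pos (by omega)]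
    have e2 : ∑ τ ∈ Finset.Ico s (s + w'), F (spl p s w w' g τ)
        = ∑ i ∈ Finset.range w', F (g i) := by
      rw [Finset.sum_Ico_eq_sum_range]
      have : s + w' - s = w' := by omega
      rw [this]
      apply Finset.sum_congr rfl
      intro i hi
      rw [Finset.mem_range] at hi
      rw [spl, if_neg (by omega), if_pos (by omega)]
      have : s + i - s = i := by omega
      rw [this]
    have e3 : ∑ τ ∈ Finset.Ico (s + w') (L + w' - w), F (spl p s w w' g τ)
        = ∑ τ ∈ Finset.Ico (s + w) L, F (p τ) := by
      rw [Finset.sum_Ico_eq_sum_range, Finset.sum_Ico_eq_sum_range]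
      have : L + w' - w - (s + w') = L - (s + w) := by omega
      rw [this]
      apply Finset.sum_congr rfl
      intro i hi
      rw [Finset.mem_range] at hi
      rw [spl, if_neg (by omega), if_neg (by omega)]
      have : s + w' + i + w - w' = s + w + i := by omega
      rw [this]
    rw [hsplit, hsplit2, e1, e2, e3]
    abel

end DTWAux

namespace DTWAux

open Finset

section Runs

variable {m n L : ℕ} {p : ℕ → ℕ × ℕ}

/-- diagonal step at index ℓ -/
def DS (p : ℕ → ℕ × ℕ) (ℓ : ℕ) : Prop :=
  (p (ℓ + 1)).1 = (p ℓ).1 + 1 ∧ (p (ℓ + 1)).2 = (p ℓ).2 + 1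

def HS (p : ℕ → ℕ × ℕ) (ℓ : ℕ) : Prop :=
  (p (ℓ + 1)).1 = (p ℓ).1 + 1 ∧ (p (ℓ + 1)).2 = (p ℓ).2

def VS (p : ℕ → ℕ × ℕ) (ℓ : ℕ) : Prop :=
  (p (ℓ + 1)).1 = (p ℓ).1 ∧ (p (ℓ + 1)).2 = (p ℓ).2 + 1

theorem step_cases (hp : IsWarpingPath m n L p) (ℓ : ℕ) (hℓ : ℓ + 1 < L) :
    HS p ℓ ∨ VS p ℓ ∨ DS p ℓ := hp.2.2.2.2 ℓ hℓ

theorem run_start :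
    ∀ t, DS p t → ∃ s, s ≤ t ∧ (∀ τ, s ≤ τ → τ ≤ t → DS p τ) ∧ (s = 0 ∨ ¬ DS p (s - 1)) := by
  intro t
  induction t with
  | zero =>
    intro h
    refine ⟨0, le_rfl, ?_, Or.inl rfl⟩
    intro τ h1 h2
    have : τ = 0 := by omega
    rw [this]; exact h
  | succ t ih =>
    intro h
    by_cases hd : DS p t
    · obtain ⟨s, hs1, hs2, hs3⟩ := ih hd
      refine ⟨s, by omega, ?_, hs3⟩
      intro τ h1 h2
      rcases Nat.lt_or_ge τ (t+1) with h3 | h3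
      · exact hs2 τ h1 (by omega)
      · have : τ = t + 1 := by omega
        rw [this]; exact h
    · refine ⟨t + 1, le_rfl, ?_, Or.inr (by simpa using hd)⟩
      intro τ h1 h2
      have : τ = t + 1 := by omega
      rw [this]; exact h

theorem run_end (hL : 1 ≤ L) :
    ∀ r t, DS p t → t + 1 < L → L - t ≤ r →
      ∃ e, t ≤ e ∧ e + 1 < L ∧ (∀ τ, t ≤ τ → τ ≤ e → DS p τ) ∧
        (e + 2 = L ∨ ¬ DS p (e + 1)) := by
  intro r
  induction r with
  | zero => intro t _ h2 h3; omega
  | succ r ih =>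
    intro t h h2 h3
    rcases Nat.eq_or_lt_of_le (show t + 2 ≤ L by omega) with hE | hE
    -- hE : t + 2 = L or t + 2 < L
    · refine ⟨t, le_rfl, by omega, ?_, Or.inl hE⟩
      intro τ h1 h2'
      have : τ = t := by omega
      rw [this]; exact h
    · by_cases hd : DS p (t + 1)
      · obtain ⟨e, he1, he2, he3, he4⟩ := ih (t+1) hd (by omega) (by omega)
        refine ⟨e, by omega, he2, ?_, he4⟩
        intro τ h1 h2'
        rcases Nat.eq_or_lt_of_le h1 with h5 | h5
        · rw [← h5]; exact h
        · exact he3 τ (by omega) h2'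
      · exact ⟨t, le_rfl, by omega, fun τ h1 h2' => by
          have : τ = t := by omega
          rw [this]; exact h, Or.inr hd⟩

theorem run_cells {s e : ℕ} (hrun : ∀ τ, s ≤ τ → τ ≤ e → DS p τ) :
    ∀ t, t ≤ e + 1 - s → p (s + t) = ((p s).1 + t, (p s).2 + t) := by
  intro t
  induction t with
  | zero => intro _; simp
  | succ t ih =>
    intro h
    have h1 := ih (by omega)
    have h2 := hrun (s + t) (by omega) (by omega)
    obtain ⟨ha, hb⟩ := h2
    have : s + (t + 1) = s + t + 1 := by omega
    rw [this]
    have h1a := congrArg Prod.fst h1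
    have h1b := congrArg Prod.snd h1
    simp only [] at h1a h1b
    have e1 : (p (s+t+1)).1 = (p s).1 + (t+1) := by rw [ha, h1a]; omega
    have e2 : (p (s+t+1)).2 = (p s).2 + (t+1) := by rw [hb, h1b]; omega
    exact Prod.ext e1 e2

end Runs

section ExchangeFacts

variable {x y : ℕ → ℝ} {m n L : ℕ} {p : ℕ → ℕ × ℕ}

/-- cell cost -/
noncomputable def cC (x y : ℕ → ℝ) : ℕ × ℕ → ℝ := fun q => (x q.1 - y q.2) ^ 2

/-- coordinate sum -/
def cP : ℕ × ℕ → ℕ := fun q => q.1 + q.2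

theorem phi_eq (L : ℕ) (p : ℕ → ℕ × ℕ) : phi L p = ∑ ℓ ∈ Finset.range L, cP (p ℓ) := rfl

theorem pathCost_eq (L : ℕ) (p : ℕ → ℕ × ℕ) :
    pathCost x y L p = ∑ ℓ ∈ Finset.range L, cC x y (p ℓ) := rfl

/-- master exchange lemma: consequences of extremality under a splice -/
theorem exchange_facts
    (hWP : IsWarpingPath m n L p)
    (hopt : pathCost x y L p = dtwSq x y m n)
    (hLmin : ∀ L' p', IsWarpingPath m n L' p' → pathCost x y L' p' = dtwSq x y m n → L ≤ L')
    (hphimax : ∀ p', IsWarpingPath m n L p' → pathCost x y L p' = dtwSq x y m n →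
      phi L p' ≤ phi L p)
    (s w w' : ℕ) (g : ℕ → ℕ × ℕ)
    (hw : 1 ≤ w) (hw' : 1 ≤ w') (hsw : s + w ≤ L - 1)
    (hgB : ∀ i < w', 1 ≤ (g i).1 ∧ (g i).1 ≤ m ∧ 1 ≤ (g i).2 ∧ (g i).2 ≤ n)
    (hgS : ∀ i, i + 1 < w' → Stp (g i) (g (i+1)))
    (hj1 : (1 ≤ s ∧ Stp (p (s-1)) (g 0)) ∨ (s = 0 ∧ g 0 = (1,1)))
    (hj2 : Stp (g (w'-1)) (p (s+w))) :
    (∑ τ ∈ Finset.Ico s (s+w), cC x y (p τ)) ≤ ∑ i ∈ Finset.range w', cC x y (g i) ∧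
    (w' < w → (∑ τ ∈ Finset.Ico s (s+w), cC x y (p τ)) < ∑ i ∈ Finset.range w', cC x y (g i)) ∧
    (w' = w → (∑ i ∈ Finset.range w', cC x y (g i)) = ∑ τ ∈ Finset.Ico s (s+w), cC x y (p τ) →
      (∑ i ∈ Finset.range w', cP (g i)) ≤ ∑ τ ∈ Finset.Ico s (s+w), cP (p τ)) := by
  obtain ⟨hWP', hsum⟩ := splice m n L p hWP s w w' g hw hw' hsw hgB hgS hj1 hj2
  have hcost := hsum ℝ inferInstance (cC x y)
  have hle : dtwSq x y m n ≤ pathCost x y (L + w' - w) (spl p s w w' g) :=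
    dtw_le x y m n _ _ hWP'
  rw [pathCost_eq] at hle
  rw [pathCost_eq] at hopt
  have f1 : (∑ τ ∈ Finset.Ico s (s+w), cC x y (p τ)) ≤ ∑ i ∈ Finset.range w', cC x y (g i) := by
    linarith [hcost, hle, hopt]
  refine ⟨f1, ?_, ?_⟩
  · intro hww
    rcases lt_or_eq_of_le f1 with h | h
    · exact h
    · exfalso
      have hco : pathCost x y (L + w' - w) (spl p s w w' g) = dtwSq x y m n := by
        rw [pathCost_eq, ← hopt]
        linarith [hcost]
      have := hLmin _ _ hWP' hco
      omega
  · intro hww heq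
    have hco : pathCost x y (L + w' - w) (spl p s w w' g) = dtwSq x y m n := by
      rw [pathCost_eq, ← hopt]
      linarith [hcost]
    have hLL : L + w' - w = L := by omega
    rw [hLL] at hWP' hco
    have hphi := hphimax _ hWP' hco
    have hsump := hsum ℕ inferInstance cP
    rw [hLL] at hsump
    rw [phi_eq, phi_eq] at hphi
    omega

end ExchangeFacts

end DTWAux

namespace DTWAux

open Finset

section Blocks

variable {K N : ℕ} {arr : ℕ → ℕ} {vr : ℕ → ℕ}

theorem arr_zero (ha : ∀ i, arr i = ∑ r ∈ Finset.Icc 1 i, vr r) : arr 0 = 0 := by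
  rw [ha]; simp

theorem arr_succ (ha : ∀ i, arr i = ∑ r ∈ Finset.Icc 1 i, vr r) (i : ℕ) (hi : 1 ≤ i) :
    arr i = arr (i-1) + vr i := by
  obtain ⟨j, rfl⟩ : ∃ j, i = j + 1 := ⟨i - 1, by omega⟩
  rw [ha, ha, Finset.sum_Icc_succ_top (by omega)]
  simp

theorem arr_lt (ha : ∀ i, arr i = ∑ r ∈ Finset.Icc 1 i, vr r)
    (hvr : ∀ i ∈ Finset.Icc 1 K, 1 ≤ vr i) (i : ℕ) (hi1 : 1 ≤ i) (hiK : i ≤ K) :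
    arr (i-1) < arr i := by
  rw [arr_succ ha i hi1]
  have := hvr i (Finset.mem_Icc.2 ⟨hi1, hiK⟩)
  omega

theorem N_pos (ha : ∀ i, arr i = ∑ r ∈ Finset.Icc 1 i, vr r)
    (hvr : ∀ i ∈ Finset.Icc 1 K, 1 ≤ vr i) (hK : 1 ≤ K) (hN : arr K = N) : 1 ≤ N := by
  have h1 := arr_lt ha hvr K hK le_rfl
  omega

end Blocks

/-- membership in boundary set -/
def Aset (K : ℕ) (arr : ℕ → ℕ) (u : ℕ) : Prop := ∃ i, 1 ≤ i ∧ i ≤ K ∧ u = arr i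

section MainCtx

variable {k l m n : ℕ} {a b : ℕ → ℕ} {x y : ℕ → ℝ} {xt yt : ℕ → ℝ}

/-- off-boundary constancy, packaged -/
theorem xconst_of (hk : 1 ≤ k) (h0 : a 0 = 0) (ham : a k = m)
    (hx : ∀ i, 1 ≤ i → i ≤ k → ∀ q, a (i - 1) < q → q ≤ a i → x q = xt i) :
    ∀ u, 1 ≤ u → u + 1 ≤ m → ¬ Aset k a u → x (u+1) = x u := by
  intro u h1 h2 h3
  refine step_const k m a x xt hk h0 ham hx u h1 h2 ?_
  intro i hi1 hi2 hne
  exact h3 ⟨i, hi1, hi2, hne⟩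

theorem quad_id
    (hxc : ∀ u, 1 ≤ u → u + 1 ≤ m → ¬ Aset k a u → x (u+1) = x u)
    (hyc : ∀ v, 1 ≤ v → v + 1 ≤ n → ¬ Aset l b v → y (v+1) = y v)
    (u v : ℕ) (hu1 : 1 ≤ u) (hum : u + 1 ≤ m) (hv1 : 1 ≤ v) (hvn : v + 1 ≤ n)
    (hfree : ¬ (Aset k a u ∧ Aset l b v)) :
    cC x y (u+1, v) + cC x y (u, v+1) = cC x y (u, v) + cC x y (u+1, v+1) := by
  by_cases hA : Aset k a u
  · have hB : ¬ Aset l b v := fun h => hfree ⟨hA, h⟩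
    have hyy : y (v+1) = y v := hyc v hv1 hvn hB
    show (x (u+1) - y v)^2 + (x u - y (v+1))^2 = (x u - y v)^2 + (x (u+1) - y (v+1))^2
    rw [hyy]; ring
  · have hxx : x (u+1) = x u := hxc u hu1 hum hA
    show (x (u+1) - y v)^2 + (x u - y (v+1))^2 = (x u - y v)^2 + (x (u+1) - y (v+1))^2
    rw [hxx]

theorem sum_Ico_one {M : Type} [AddCommMonoid M] (f : ℕ → M) (s : ℕ) :
    ∑ τ ∈ Finset.Ico s (s+1), f τ = f s := by
  rw [Finset.sum_Ico_eq_sum_range]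
  simp

theorem sum_Ico_two {M : Type} [AddCommMonoid M] (f : ℕ → M) (s : ℕ) :
    ∑ τ ∈ Finset.Ico s (s+2), f τ = f s + f (s+1) := by
  rw [Finset.sum_Ico_eq_sum_range]
  have h2 : s + 2 - s = 2 := by omega
  rw [h2, Finset.sum_range_succ, Finset.sum_range_one]
  norm_num

section Extremal

variable {L : ℕ} {p : ℕ → ℕ × ℕ}

/-- no mid-block vertical step, by escalation to the end of the vertical run -/
theorem esc_V
    (hAm : Aset k a m)
    (hxc : ∀ u, 1 ≤ u → u + 1 ≤ m → ¬ Aset k a u → x (u+1) = x u)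
    (hWP : IsWarpingPath m n L p)
    (hopt : pathCost x y L p = dtwSq x y m n)
    (hLmin : ∀ L' p', IsWarpingPath m n L' p' → pathCost x y L' p' = dtwSq x y m n → L ≤ L')
    (hphimax : ∀ p', IsWarpingPath m n L p' → pathCost x y L p' = dtwSq x y m n →
      phi L p' ≤ phi L p) :
    ∀ r ℓ, L - ℓ ≤ r → ℓ + 1 < L → VS p ℓ → ¬ Aset k a (p ℓ).1 → False := by
  intro r
  induction r with
  | zero => intro ℓ h1 h2 _ _; omega
  | succ r ih =>
    intro ℓ hr hℓ hV hA
    obtain ⟨hu1, hum, hv1, hvn⟩ := hWP.2.2.2.1 ℓ (by omega)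
    obtain ⟨hu1', hum', hv1', hvn'⟩ := hWP.2.2.2.1 (ℓ+1) (by omega)
    have hunm : (p ℓ).1 ≠ m := fun h => hA (h ▸ hAm)
    rcases Nat.eq_or_lt_of_le (show ℓ + 2 ≤ L by omega) with hE | hE
    · -- p (ℓ+1) is the final cell
      have : p (ℓ+1) = (m, n) := by
        have := hWP.2.2.1
        rw [show L - 1 = ℓ + 1 by omega] at this
        exact this
      apply hA
      have h2 : (p (ℓ+1)).1 = m := by rw [this]
      have h3 : (p ℓ).1 = m := by rw [← hV.1, h2]
      rw [h3]; exact hAm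
    · rcases step_cases hWP (ℓ+1) (by omega) with hs | hs | hs
      · -- horizontal after vertical: shortcut
        have hEX := exchange_facts hWP hopt hLmin hphimax ℓ 2 1 (fun _ => p ℓ)
          (by omega) (by omega) (by omega)
          (fun i _ => ⟨hu1, hum, hv1, hvn⟩)
          (fun i hi => absurd hi (by omega))
          (by
            rcases Nat.eq_zero_or_pos ℓ with h0 | h0
            · exact Or.inr ⟨h0, by rw [h0]; exact hWP.2.1⟩
            · refine Or.inl ⟨h0, ?_⟩
              have := hWP.2.2.2.2 (ℓ-1) (by omega)
              rw [show ℓ - 1 + 1 = ℓ by omega] at this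
              exact this)
          (by
            show Stp (p ℓ) (p (ℓ + 2))
            right; right
            constructor
            · rw [hs.1, hV.1]
            · rw [hs.2, hV.2])
        obtain ⟨f1, f2, _⟩ := hEX
        have := f2 (by omega)
        rw [sum_Ico_two (fun τ => cC x y (p τ)) ℓ, Finset.sum_range_one] at this
        have hnn : 0 ≤ cC x y (p (ℓ+1)) := sq_nonneg _
        linarith
      · -- vertical continues
        exact ih (ℓ+1) (by omega) (by omega) hs (by
          intro hAA
          apply hA
          rwa [hV.1] at hAA)
      · -- diagonal after vertical: swap the corner cell
        have hEX := exchange_facts hWP hopt hLmin hphimax (ℓ+1) 1 1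
          (fun _ => ((p ℓ).1 + 1, (p ℓ).2 + 1))
          (by omega) (by omega) (by omega)
          (by
            intro i _
            have h2 : (p (ℓ+1)).2 = (p ℓ).2 + 1 := hV.2
            refine ⟨?_, ?_, ?_, ?_⟩ <;> simp only [] <;> omega)
          (fun i hi => absurd hi (by omega))
          (by
            refine Or.inl ⟨by omega, ?_⟩
            rw [show ℓ + 1 - 1 = ℓ by omega]
            right; right; exact ⟨rfl, rfl⟩)
          (by
            show Stp ((p ℓ).1 + 1, (p ℓ).2 + 1) (p (ℓ+1+1))
            right; left
            constructor
            · show (p (ℓ+2)).1 = (p ℓ).1 + 1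
              rw [hs.1, hV.1]
            · show (p (ℓ+2)).2 = (p ℓ).2 + 1 + 1
              rw [hs.2, hV.2])
        obtain ⟨f1, _, f3⟩ := hEX
        have hxeq : x ((p ℓ).1 + 1) = x (p ℓ).1 := hxc (p ℓ).1 hu1 (by omega) hA
        have hceq : (∑ i ∈ Finset.range 1, cC x y ((fun _ => ((p ℓ).1 + 1, (p ℓ).2 + 1)) i))
            = ∑ τ ∈ Finset.Ico (ℓ+1) (ℓ+1+1), cC x y (p τ) := by
          rw [sum_Ico_one (fun τ => cC x y (p τ)), Finset.sum_range_one]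
          have hp1 : p (ℓ+1) = ((p ℓ).1, (p ℓ).2 + 1) := Prod.ext hV.1 hV.2
          rw [hp1]
          show (x ((p ℓ).1 + 1) - y ((p ℓ).2 + 1))^2 = (x (p ℓ).1 - y ((p ℓ).2 + 1))^2
          rw [hxeq]
        have := f3 rfl hceq
        rw [sum_Ico_one (fun τ => cP (p τ)), Finset.sum_range_one] at this
        have hp1 : p (ℓ+1) = ((p ℓ).1, (p ℓ).2 + 1) := Prod.ext hV.1 hV.2
        rw [hp1] at this
        simp [cP] at this

end Extremal

end MainCtx

end DTWAux

namespace DTWAux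

open Finset

section Diag

variable {k l m n : ℕ} {a b : ℕ → ℕ} {x y : ℕ → ℝ} {L : ℕ} {p : ℕ → ℕ × ℕ}

theorem diag_conform
    (hAm : Aset k a m) (hBn : Aset l b n)
    (hxc : ∀ u, 1 ≤ u → u + 1 ≤ m → ¬ Aset k a u → x (u+1) = x u)
    (hyc : ∀ v, 1 ≤ v → v + 1 ≤ n → ¬ Aset l b v → y (v+1) = y v)
    (hWP : IsWarpingPath m n L p)
    (hopt : pathCost x y L p = dtwSq x y m n)
    (hLmin : ∀ L' p', IsWarpingPath m n L' p' → pathCost x y L' p' = dtwSq x y m n → L ≤ L')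
    (hphimax : ∀ p', IsWarpingPath m n L p' → pathCost x y L p' = dtwSq x y m n →
      phi L p' ≤ phi L p)
    (ℓ : ℕ) (hℓ : ℓ + 1 < L) (hD : DS p ℓ)
    (hbad0 : ((p ℓ).2 : ℤ) - (p ℓ).1 ≠ 0)
    (hbadij : ∀ i, 1 ≤ i → i ≤ k → ∀ j, 1 ≤ j → j ≤ l →
      ((p ℓ).2 : ℤ) - (p ℓ).1 ≠ (b j : ℤ) - (a i : ℤ)) : False := by
  classical
  obtain ⟨s, hs1, hs2, hs3⟩ := run_start ℓ hD
  obtain ⟨e, he1, he2, he3, he4⟩ := run_end hWP.1 L ℓ hD hℓ (by omega)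
  have hrun : ∀ τ, s ≤ τ → τ ≤ e → DS p τ := by
    intro τ h1 h2
    rcases le_or_gt τ ℓ with h3 | h3
    · exact hs2 τ h1 h3
    · exact he3 τ (by omega) h2
  set d := e + 1 - s with hdd
  have hd1 : 1 ≤ d := by omega
  set u0 := (p s).1 with hu0
  set v0 := (p s).2 with hv0
  have hq : ∀ t, t ≤ d → p (s + t) = (u0 + t, v0 + t) := by
    intro t ht
    exact run_cells hrun t (by omega)
  have hq1 : ∀ t, t ≤ d → (p (s + t)).1 = u0 + t := fun t ht => by rw [hq t ht]
  have hq2 : ∀ t, t ≤ d → (p (s + t)).2 = v0 + t := fun t ht => by rw [hq t ht]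
  have hsd : s + d = e + 1 := by omega
  -- bounds along the run
  have hbnd : ∀ t, t ≤ d → 1 ≤ u0 + t ∧ u0 + t ≤ m ∧ 1 ≤ v0 + t ∧ v0 + t ≤ n := by
    intro t ht
    have hB := hWP.2.2.2.1 (s + t) (by omega)
    rw [hq1 t ht, hq2 t ht] at hB
    exact hB
  have hum : u0 + d ≤ m := (hbnd d le_rfl).2.1
  have hvn : v0 + d ≤ n := (hbnd d le_rfl).2.2.2
  have hu1 : 1 ≤ u0 := (hbnd 0 (by omega)).1
  have hv1 : 1 ≤ v0 := (hbnd 0 (by omega)).2.2.1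
  -- the offset at ℓ equals v0 - u0
  have hℓs : ℓ = s + (ℓ - s) := by omega
  have hply1 : (p ℓ).1 = u0 + (ℓ - s) := by
    conv_lhs => rw [hℓs]
    exact hq1 _ (by omega)
  have hply2 : (p ℓ).2 = v0 + (ℓ - s) := by
    conv_lhs => rw [hℓs]
    exact hq2 _ (by omega)
  have hsig0 : (v0 : ℤ) - u0 ≠ 0 := by
    intro h; apply hbad0; rw [hply1, hply2]; push_cast; omega
  have hsigij : ∀ i, 1 ≤ i → i ≤ k → ∀ j, 1 ≤ j → j ≤ l →
      (v0 : ℤ) - u0 ≠ (b j : ℤ) - (a i : ℤ) := by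
    intro i hi1 hi2 j hj1 hj2 h
    apply hbadij i hi1 hi2 j hj1 hj2
    rw [hply1, hply2]; push_cast; push_cast at h; omega
  -- corner-freeness
  have hfree : ∀ t, t < d → ¬ (Aset k a (u0 + t) ∧ Aset l b (v0 + t)) := by
    rintro t ht ⟨⟨i, hi1, hi2, hui⟩, ⟨j, hj1, hj2, hvj⟩⟩
    refine hsigij i hi1 hi2 j hj1 hj2 ?_
    have : u0 + t = a i := hui
    have : v0 + t = b j := hvj
    omega
  -- the run cannot start at the path start
  rcases hs3 with hs0 | hndp
  · have h0 := hWP.2.1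
    rw [hs0] at hq1 hq2
    have e1 : (p 0).1 = 1 := by rw [h0]
    have e2 : (p 0).2 = 1 := by rw [h0]
    have e3 := hq1 0 (by omega)
    have e4 := hq2 0 (by omega)
    rw [e1] at e3; rw [e2] at e4
    apply hsig0
    omega
  have hs1' : 1 ≤ s := by
    rcases Nat.eq_zero_or_pos s with h | h
    · exfalso
      apply hndp
      rw [h]
      rw [h] at hs2
      exact hs2 0 le_rfl (by omega)
    · exact h
  -- the run cannot end at the path end
  rcases Nat.eq_or_lt_of_le (show e + 2 ≤ L by omega) with heL | heL
  · obtain ⟨i, hi1, hi2, hmi⟩ := hAm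
    obtain ⟨j, hj1, hj2, hnj⟩ := hBn
    have hE := hWP.2.2.1
    rw [show L - 1 = e + 1 by omega] at hE
    have e1 : (p (e+1)).1 = m := by rw [hE]
    have e2 : (p (e+1)).2 = n := by rw [hE]
    rw [← hsd] at e1 e2
    rw [hq1 d le_rfl] at e1
    rw [hq2 d le_rfl] at e2
    apply hsigij i hi1 hi2 j hj1 hj2
    have : m = a i := hmi
    have : n = b j := hnj
    omega
  have hnde : ¬ DS p (e+1) := by
    rcases he4 with h | h
    · omega
    · exact h
  -- classify the steps before and after the run
  have hprev : HS p (s-1) ∨ VS p (s-1) := by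
    rcases step_cases hWP (s-1) (by omega) with h | h | h
    · exact Or.inl h
    · exact Or.inr h
    · exact absurd h hndp
  have hnext : HS p (e+1) ∨ VS p (e+1) := by
    rcases step_cases hWP (e+1) (by omega) with h | h | h
    · exact Or.inl h
    · exact Or.inr h
    · exact absurd h hnde
  -- facts about the previous cell
  have hs1e : s - 1 + 1 = s := by omega
  -- sums
  set S0 := ∑ i ∈ Finset.range d, cC x y (u0 + i, v0 + i) with hS0
  set S1 := ∑ i ∈ Finset.range d, cC x y (u0 + i + 1, v0 + i) with hS1
  set S2 := ∑ i ∈ Finset.range d, cC x y (u0 + i, v0 + i + 1) with hS2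
  set S3 := ∑ i ∈ Finset.range d, cC x y (u0 + i + 1, v0 + i + 1) with hS3
  have hquad : S1 + S2 = S0 + S3 := by
    rw [hS1, hS2, hS0, hS3, ← Finset.sum_add_distrib, ← Finset.sum_add_distrib]
    refine Finset.sum_congr rfl ?_
    intro i hi
    rw [Finset.mem_range] at hi
    have hb := hbnd i (by omega)
    have hb' := hbnd (i+1) (by omega)
    exact quad_id hxc hyc (u0+i) (v0+i) (by omega) (by omega) (by omega) (by omega)
      (hfree i hi)
  have hW0 : ∑ τ ∈ Finset.Ico s (s + d), cC x y (p τ) = S0 := by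
    rw [Finset.sum_Ico_eq_sum_range, hS0]
    have : s + d - s = d := by omega
    rw [this]
    refine Finset.sum_congr rfl ?_
    intro i hi
    rw [Finset.mem_range] at hi
    rw [hq i (by omega)]
  have hW3 : ∑ τ ∈ Finset.Ico (s+1) (s + 1 + d), cC x y (p τ) = S3 := by
    rw [Finset.sum_Ico_eq_sum_range, hS3]
    have : s + 1 + d - (s+1) = d := by omega
    rw [this]
    refine Finset.sum_congr rfl ?_
    intro i hi
    rw [Finset.mem_range] at hi
    have : s + 1 + i = s + (i + 1) := by omega
    rw [this, hq (i+1) (by omega)]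
    have e1 : u0 + (i + 1) = u0 + i + 1 := by omega
    have e2 : v0 + (i + 1) = v0 + i + 1 := by omega
    rw [e1, e2]
  have hP0 : ∑ τ ∈ Finset.Ico s (s + d), cP (p τ) = ∑ i ∈ Finset.range d, cP (u0 + i, v0 + i) := by
    rw [Finset.sum_Ico_eq_sum_range]
    have : s + d - s = d := by omega
    rw [this]
    refine Finset.sum_congr rfl ?_
    intro i hi
    rw [Finset.mem_range] at hi
    rw [hq i (by omega)]
  have hP3 : ∑ τ ∈ Finset.Ico (s+1) (s + 1 + d), cP (p τ)
      = ∑ i ∈ Finset.range d, cP (u0 + i + 1, v0 + i + 1) := by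
    rw [Finset.sum_Ico_eq_sum_range]
    have : s + 1 + d - (s+1) = d := by omega
    rw [this]
    refine Finset.sum_congr rfl ?_
    intro i hi
    rw [Finset.mem_range] at hi
    have : s + 1 + i = s + (i + 1) := by omega
    rw [this, hq (i+1) (by omega)]
    have e1 : u0 + (i + 1) = u0 + i + 1 := by omega
    have e2 : v0 + (i + 1) = v0 + i + 1 := by omega
    rw [e1, e2]
  have hWV : ∑ τ ∈ Finset.Ico s (s + (d+1)), cC x y (p τ)
      = S0 + cC x y (u0 + d, v0 + d) := by
    rw [Finset.sum_Ico_eq_sum_range]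
    have h1 : s + (d+1) - s = d + 1 := by omega
    rw [h1]
    have h2 : ∀ i ∈ Finset.range (d+1), cC x y (p (s+i)) = cC x y (u0 + i, v0 + i) := by
      intro i hi
      rw [Finset.mem_range] at hi
      rw [hq i (by omega)]
    rw [Finset.sum_congr rfl h2, Finset.sum_range_succ, hS0]
  have hshift : S0 + cC x y (u0 + d, v0 + d) = cC x y (u0, v0) + S3 := by
    have h1 : ∑ i ∈ Finset.range (d+1), cC x y (u0 + i, v0 + i)
        = S0 + cC x y (u0 + d, v0 + d) := Finset.sum_range_succ _ d
    have h2 : ∑ i ∈ Finset.range (d+1), cC x y (u0 + i, v0 + i)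
        = S3 + cC x y (u0, v0) := by
      rw [Finset.sum_range_succ']
      congr 1
    rw [← h1, h2]
    ring
  have hstep0 : Stp (p (s-1)) (p s) := by
    have h := hWP.2.2.2.2 (s-1) (by omega)
    rw [hs1e] at h
    exact h
  rcases hprev with hpH | hpV <;> rcases hnext with hnH | hnV
  · -- prev horizontal, next horizontal
    have hpa : (p s).1 = (p (s-1)).1 + 1 := by
      have h := hpH.1; rwa [hs1e] at h
    have hpb : (p s).2 = (p (s-1)).2 := by
      have h := hpH.2; rwa [hs1e] at h
    have hna : (p (e+2)).1 = u0 + d + 1 := by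
      have h := hnH.1
      rw [show e + 1 + 1 = e + 2 by omega] at h
      have h2 : (p (e+1)).1 = u0 + d := by rw [← hsd]; exact hq1 d le_rfl
      omega
    have hnb : (p (e+2)).2 = v0 + d := by
      have h := hnH.2
      rw [show e + 1 + 1 = e + 2 by omega] at h
      have h2 : (p (e+1)).2 = v0 + d := by rw [← hsd]; exact hq2 d le_rfl
      omega
    have hEA := exchange_facts hWP hopt hLmin hphimax s d d
      (fun i => (u0 + i, v0 + i + 1)) hd1 hd1 (by omega)
      (by
        intro i hi
        have hb := hbnd i (by omega)
        have hb' := hbnd (i+1) (by omega)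
        refine ⟨?_, ?_, ?_, ?_⟩ <;> simp only [] <;> omega)
      (by
        intro i hi
        right; right
        refine ⟨?_, ?_⟩ <;> simp only [] <;> omega)
      (by
        refine Or.inl ⟨hs1', ?_⟩
        right; right
        refine ⟨?_, ?_⟩ <;> simp only [] <;> omega)
      (by
        have h1 := hq1 d le_rfl
        have h2 := hq2 d le_rfl
        left
        refine ⟨?_, ?_⟩ <;> simp only [] <;> omega)
    have hED := exchange_facts hWP hopt hLmin hphimax (s+1) d d
      (fun i => (u0 + i + 1, v0 + i)) hd1 hd1 (by omega)
      (by
        intro i hi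
        have hb := hbnd i (by omega)
        have hb' := hbnd (i+1) (by omega)
        refine ⟨?_, ?_, ?_, ?_⟩ <;> simp only [] <;> omega)
      (by
        intro i hi
        right; right
        refine ⟨?_, ?_⟩ <;> simp only [] <;> omega)
      (by
        refine Or.inl ⟨by omega, ?_⟩
        have : s + 1 - 1 = s := by omega
        rw [this]
        left
        refine ⟨?_, ?_⟩ <;> simp only [] <;> omega)
      (by
        have : s + 1 + d = e + 2 := by omega
        rw [this]
        right; right
        refine ⟨?_, ?_⟩ <;> simp only [] <;> omega)
    obtain ⟨fA1, _, fA3⟩ := hEA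
    obtain ⟨fD1, _, _⟩ := hED
    have egA : (∑ i ∈ Finset.range d, cC x y ((fun i => (u0 + i, v0 + i + 1)) i)) = S2 := rfl
    have egD : (∑ i ∈ Finset.range d, cC x y ((fun i => (u0 + i + 1, v0 + i)) i)) = S1 := rfl
    rw [hW0, egA] at fA1
    rw [hW3, egD] at fD1
    have hS2eq : S2 = S0 := by linarith
    have hphi := fA3 rfl (by rw [hW0, egA, hS2eq])
    rw [hP0] at hphi
    have hstep : (∑ i ∈ Finset.range d, cP ((fun i => (u0 + i, v0 + i + 1)) i))
        = ∑ i ∈ Finset.range d, (cP (u0 + i, v0 + i) + 1) := by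
      refine Finset.sum_congr rfl ?_
      intro i hi
      show (u0 + i) + (v0 + i + 1) = ((u0 + i) + (v0 + i)) + 1
      omega
    rw [Finset.sum_add_distrib, Finset.sum_const, Finset.card_range, smul_eq_mul,
      mul_one] at hstep
    rw [hstep] at hphi
    omega
  · -- prev horizontal, next vertical
    have hpa : (p s).1 = (p (s-1)).1 + 1 := by
      have h := hpH.1; rwa [hs1e] at h
    have hpb : (p s).2 = (p (s-1)).2 := by
      have h := hpH.2; rwa [hs1e] at h
    have hna : (p (e+2)).1 = u0 + d := by
      have h := hnV.1
      rw [show e + 1 + 1 = e + 2 by omega] at h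
      have h2 : (p (e+1)).1 = u0 + d := by rw [← hsd]; exact hq1 d le_rfl
      omega
    have hnb : (p (e+2)).2 = v0 + d + 1 := by
      have h := hnV.2
      rw [show e + 1 + 1 = e + 2 by omega] at h
      have h2 : (p (e+1)).2 = v0 + d := by rw [← hsd]; exact hq2 d le_rfl
      omega
    have hEV := exchange_facts hWP hopt hLmin hphimax s (d+1) d
      (fun i => (u0 + i, v0 + i + 1)) (by omega) hd1 (by omega)
      (by
        intro i hi
        have hb := hbnd i (by omega)
        have hb' := hbnd (i+1) (by omega)
        refine ⟨?_, ?_, ?_, ?_⟩ <;> simp only [] <;> omega)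
      (by
        intro i hi
        right; right
        refine ⟨?_, ?_⟩ <;> simp only [] <;> omega)
      (by
        refine Or.inl ⟨hs1', ?_⟩
        right; right
        refine ⟨?_, ?_⟩ <;> simp only [] <;> omega)
      (by
        have h1 : s + (d+1) = e + 2 := by omega
        rw [h1]
        right; right
        refine ⟨?_, ?_⟩ <;> simp only [] <;> omega)
    have hEW := exchange_facts hWP hopt hLmin hphimax s d (d+1)
      (fun i => if i = 0 then (u0, v0) else (u0 + i, v0 + i - 1)) hd1 (by omega) (by omega)
      (by
        intro i hi
        by_cases h0 : i = 0
        · subst h0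
          have hb0 := hbnd 0 (by omega)
          exact ⟨hb0.1, hb0.2.1, hb0.2.2.1, hb0.2.2.2⟩
        · have hb := hbnd i (by omega)
          refine ⟨?_, ?_, ?_, ?_⟩ <;> simp only [if_neg h0] <;> omega)
      (by
        intro i hi
        by_cases h0 : i = 0
        · subst h0
          exact Or.inl ⟨rfl, rfl⟩
        · right; right
          refine ⟨?_, ?_⟩ <;>
            simp only [if_neg h0, if_neg (Nat.succ_ne_zero i)] <;> omega)
      (by
        refine Or.inl ⟨hs1', ?_⟩
        show Stp (p (s-1)) (u0, v0)
        have : (u0, v0) = p s := rfl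
        rw [this]
        exact hstep0)
      (by
        have h1 : d + 1 - 1 = d := by omega
        rw [h1]
        have h2 := hq1 d le_rfl
        have h3 := hq2 d le_rfl
        right; left
        refine ⟨?_, ?_⟩ <;> simp only [if_neg (by omega : d ≠ 0)] <;> omega)
    obtain ⟨_, fV2, _⟩ := hEV
    obtain ⟨fW1, _, _⟩ := hEW
    have fV2' := fV2 (by omega)
    have egV : (∑ i ∈ Finset.range d, cC x y ((fun i => (u0 + i, v0 + i + 1)) i)) = S2 := rfl
    rw [hWV, egV] at fV2'
    have egW : (∑ i ∈ Finset.range (d+1),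
        cC x y ((fun i => if i = 0 then (u0, v0) else (u0 + i, v0 + i - 1)) i))
        = cC x y (u0, v0) + S1 := by
      rw [Finset.sum_range_succ']
      have h2 : ∀ i ∈ Finset.range d,
          cC x y ((fun i => if i = 0 then (u0, v0) else (u0 + i, v0 + i - 1)) (i+1))
          = cC x y (u0 + i + 1, v0 + i) := by
        intro i hi
        simp only [if_neg (Nat.succ_ne_zero i)]
        have e1 : u0 + (i + 1) = u0 + i + 1 := by omega
        have e2 : v0 + (i + 1) - 1 = v0 + i := by omega
        rw [e1, e2]
      rw [Finset.sum_congr rfl h2]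
      norm_num
      rw [hS1]
      ring
    rw [hW0, egW] at fW1
    have hnn : (0:ℝ) ≤ cC x y (u0+d, v0+d) := sq_nonneg _
    have hnn0 : (0:ℝ) ≤ cC x y (u0, v0) := sq_nonneg _
    linarith
  · -- prev vertical, next horizontal
    have hpa : (p s).1 = (p (s-1)).1 := by
      have h := hpV.1; rwa [hs1e] at h
    have hpb : (p s).2 = (p (s-1)).2 + 1 := by
      have h := hpV.2; rwa [hs1e] at h
    have hna : (p (e+2)).1 = u0 + d + 1 := by
      have h := hnH.1
      rw [show e + 1 + 1 = e + 2 by omega] at h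
      have h2 : (p (e+1)).1 = u0 + d := by rw [← hsd]; exact hq1 d le_rfl
      omega
    have hnb : (p (e+2)).2 = v0 + d := by
      have h := hnH.2
      rw [show e + 1 + 1 = e + 2 by omega] at h
      have h2 : (p (e+1)).2 = v0 + d := by rw [← hsd]; exact hq2 d le_rfl
      omega
    have hEV := exchange_facts hWP hopt hLmin hphimax s (d+1) d
      (fun i => (u0 + i + 1, v0 + i)) (by omega) hd1 (by omega)
      (by
        intro i hi
        have hb := hbnd i (by omega)
        have hb' := hbnd (i+1) (by omega)
        refine ⟨?_, ?_, ?_, ?_⟩ <;> simp only [] <;> omega)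
      (by
        intro i hi
        right; right
        refine ⟨?_, ?_⟩ <;> simp only [] <;> omega)
      (by
        refine Or.inl ⟨hs1', ?_⟩
        right; right
        refine ⟨?_, ?_⟩ <;> simp only [] <;> omega)
      (by
        have h1 : s + (d+1) = e + 2 := by omega
        rw [h1]
        right; right
        refine ⟨?_, ?_⟩ <;> simp only [] <;> omega)
    have hEW := exchange_facts hWP hopt hLmin hphimax s d (d+1)
      (fun i => if i = 0 then (u0, v0) else (u0 + i - 1, v0 + i)) hd1 (by omega) (by omega)
      (by
        intro i hi
        by_cases h0 : i = 0
        · subst h0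
          have hb0 := hbnd 0 (by omega)
          exact ⟨hb0.1, hb0.2.1, hb0.2.2.1, hb0.2.2.2⟩
        · have hb := hbnd i (by omega)
          refine ⟨?_, ?_, ?_, ?_⟩ <;> simp only [if_neg h0] <;> omega)
      (by
        intro i hi
        by_cases h0 : i = 0
        · subst h0
          exact Or.inr (Or.inl ⟨rfl, rfl⟩)
        · right; right
          refine ⟨?_, ?_⟩ <;>
            simp only [if_neg h0, if_neg (Nat.succ_ne_zero i)] <;> omega)
      (by
        refine Or.inl ⟨hs1', ?_⟩
        show Stp (p (s-1)) (u0, v0)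
        have : (u0, v0) = p s := rfl
        rw [this]
        exact hstep0)
      (by
        have h1 : d + 1 - 1 = d := by omega
        rw [h1]
        have h2 := hq1 d le_rfl
        have h3 := hq2 d le_rfl
        left
        refine ⟨?_, ?_⟩ <;> simp only [if_neg (by omega : d ≠ 0)] <;> omega)
    obtain ⟨_, fV2, _⟩ := hEV
    obtain ⟨fW1, _, _⟩ := hEW
    have fV2' := fV2 (by omega)
    have egV : (∑ i ∈ Finset.range d, cC x y ((fun i => (u0 + i + 1, v0 + i)) i)) = S1 := rfl
    rw [hWV, egV] at fV2'
    have egW : (∑ i ∈ Finset.range (d+1),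
        cC x y ((fun i => if i = 0 then (u0, v0) else (u0 + i - 1, v0 + i)) i))
        = cC x y (u0, v0) + S2 := by
      rw [Finset.sum_range_succ']
      have h2 : ∀ i ∈ Finset.range d,
          cC x y ((fun i => if i = 0 then (u0, v0) else (u0 + i - 1, v0 + i)) (i+1))
          = cC x y (u0 + i, v0 + i + 1) := by
        intro i hi
        simp only [if_neg (Nat.succ_ne_zero i)]
        have e1 : u0 + (i + 1) - 1 = u0 + i := by omega
        have e2 : v0 + (i + 1) = v0 + i + 1 := by omega
        rw [e1, e2]
      rw [Finset.sum_congr rfl h2]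
      norm_num
      rw [hS2]
      ring
    rw [hW0, egW] at fW1
    have hnn : (0:ℝ) ≤ cC x y (u0+d, v0+d) := sq_nonneg _
    have hnn0 : (0:ℝ) ≤ cC x y (u0, v0) := sq_nonneg _
    linarith
  · -- prev vertical, next vertical : slide the run sideways
    have hpa : (p s).1 = (p (s-1)).1 := by
      have h := hpV.1; rwa [hs1e] at h
    have hpb : (p s).2 = (p (s-1)).2 + 1 := by
      have h := hpV.2; rwa [hs1e] at h
    have hna : (p (e+2)).1 = u0 + d := by
      have h := hnV.1
      rw [show e + 1 + 1 = e + 2 by omega] at h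
      have h2 : (p (e+1)).1 = u0 + d := by rw [← hsd]; exact hq1 d le_rfl
      omega
    have hnb : (p (e+2)).2 = v0 + d + 1 := by
      have h := hnV.2
      rw [show e + 1 + 1 = e + 2 by omega] at h
      have h2 : (p (e+1)).2 = v0 + d := by rw [← hsd]; exact hq2 d le_rfl
      omega
    -- exchange A: translate run cells by (1,0)
    have hEA := exchange_facts hWP hopt hLmin hphimax s d d
      (fun i => (u0 + i + 1, v0 + i)) hd1 hd1 (by omega)
      (by
        intro i hi
        have hb := hbnd i (by omega)
        have hb' := hbnd (i+1) (by omega)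
        refine ⟨?_, ?_, ?_, ?_⟩ <;> simp only [] <;> omega)
      (by
        intro i hi
        right; right
        refine ⟨?_, ?_⟩ <;> simp only [] <;> omega)
      (by
        refine Or.inl ⟨hs1', ?_⟩
        right; right
        refine ⟨?_, ?_⟩ <;> simp only [] <;> omega)
      (by
        have h1 := hq1 d le_rfl
        have h2 := hq2 d le_rfl
        right; left
        refine ⟨?_, ?_⟩ <;> simp only [] <;> omega)
    -- exchange D: shift-translate run cells by (0,1)
    have hED := exchange_facts hWP hopt hLmin hphimax (s+1) d d
      (fun i => (u0 + i, v0 + i + 1)) hd1 hd1 (by omega)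
      (by
        intro i hi
        have hb := hbnd i (by omega)
        have hb' := hbnd (i+1) (by omega)
        refine ⟨?_, ?_, ?_, ?_⟩ <;> simp only [] <;> omega)
      (by
        intro i hi
        right; right
        refine ⟨?_, ?_⟩ <;> simp only [] <;> omega)
      (by
        refine Or.inl ⟨by omega, ?_⟩
        have : s + 1 - 1 = s := by omega
        rw [this]
        right; left
        refine ⟨?_, ?_⟩ <;> simp only [] <;> omega)
      (by
        have : s + 1 + d = e + 2 := by omega
        rw [this]
        right; right
        refine ⟨?_, ?_⟩ <;> simp only [] <;> omega)
    obtain ⟨fA1, _, fA3⟩ := hEA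
    obtain ⟨fD1, _, _⟩ := hED
    have egA : (∑ i ∈ Finset.range d, cC x y ((fun i => (u0 + i + 1, v0 + i)) i)) = S1 := rfl
    have egD : (∑ i ∈ Finset.range d, cC x y ((fun i => (u0 + i, v0 + i + 1)) i)) = S2 := rfl
    rw [hW0, egA] at fA1
    rw [hW3, egD] at fD1
    have hS1eq : S1 = S0 := by linarith
    have hphi := fA3 rfl (by rw [hW0, egA, hS1eq])
    rw [hP0] at hphi
    have hstep : (∑ i ∈ Finset.range d, cP ((fun i => (u0 + i + 1, v0 + i)) i))
        = ∑ i ∈ Finset.range d, (cP (u0 + i, v0 + i) + 1) := by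
      refine Finset.sum_congr rfl ?_
      intro i hi
      show (u0 + i + 1) + (v0 + i) = ((u0 + i) + (v0 + i)) + 1
      omega
    rw [Finset.sum_add_distrib, Finset.sum_const, Finset.card_range, smul_eq_mul,
      mul_one] at hstep
    rw [hstep] at hphi
    omega

end Diag

end DTWAux

namespace DTWAux

open Finset

section EscH

variable {k l m n : ℕ} {a b : ℕ → ℕ} {x y : ℕ → ℝ} {L : ℕ} {p : ℕ → ℕ × ℕ}

/-- no mid-block horizontal step (mirror of esc_V) -/
theorem esc_H
    (hBn : Aset l b n)
    (hyc : ∀ v, 1 ≤ v → v + 1 ≤ n → ¬ Aset l b v → y (v+1) = y v)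
    (hWP : IsWarpingPath m n L p)
    (hopt : pathCost x y L p = dtwSq x y m n)
    (hLmin : ∀ L' p', IsWarpingPath m n L' p' → pathCost x y L' p' = dtwSq x y m n → L ≤ L')
    (hphimax : ∀ p', IsWarpingPath m n L p' → pathCost x y L p' = dtwSq x y m n →
      phi L p' ≤ phi L p) :
    ∀ r ℓ, L - ℓ ≤ r → ℓ + 1 < L → HS p ℓ → ¬ Aset l b (p ℓ).2 → False := by
  intro r
  induction r with
  | zero => intro ℓ h1 h2 _ _; omega
  | succ r ih =>
    intro ℓ hr hℓ hH hB
    obtain ⟨hu1, hum, hv1, hvn⟩ := hWP.2.2.2.1 ℓ (by omega)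
    obtain ⟨hu1', hum', hv1', hvn'⟩ := hWP.2.2.2.1 (ℓ+1) (by omega)
    have hvnn : (p ℓ).2 ≠ n := fun h => hB (h ▸ hBn)
    rcases Nat.eq_or_lt_of_le (show ℓ + 2 ≤ L by omega) with hE | hE
    · -- p (ℓ+1) is the final cell
      have hfin : p (ℓ+1) = (m, n) := by
        have := hWP.2.2.1
        rw [show L - 1 = ℓ + 1 by omega] at this
        exact this
      apply hB
      have h2 : (p (ℓ+1)).2 = n := by rw [hfin]
      have h3 : (p ℓ).2 = n := by rw [← hH.2, h2]
      rw [h3]; exact hBn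
    · rcases step_cases hWP (ℓ+1) (by omega) with hs | hs | hs
      · -- horizontal continues
        exact ih (ℓ+1) (by omega) (by omega) hs (by
          intro hBB
          apply hB
          rwa [hH.2] at hBB)
      · -- vertical after horizontal: shortcut
        have hEX := exchange_facts hWP hopt hLmin hphimax ℓ 2 1 (fun _ => p ℓ)
          (by omega) (by omega) (by omega)
          (fun i _ => ⟨hu1, hum, hv1, hvn⟩)
          (fun i hi => absurd hi (by omega))
          (by
            rcases Nat.eq_zero_or_pos ℓ with h0 | h0
            · exact Or.inr ⟨h0, by rw [h0]; exact hWP.2.1⟩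
            · refine Or.inl ⟨h0, ?_⟩
              have := hWP.2.2.2.2 (ℓ-1) (by omega)
              rw [show ℓ - 1 + 1 = ℓ by omega] at this
              exact this)
          (by
            show Stp (p ℓ) (p (ℓ + 2))
            right; right
            constructor
            · rw [hs.1, hH.1]
            · rw [hs.2, hH.2])
        obtain ⟨f1, f2, _⟩ := hEX
        have := f2 (by omega)
        rw [sum_Ico_two (fun τ => cC x y (p τ)) ℓ, Finset.sum_range_one] at this
        have hnn : 0 ≤ cC x y (p (ℓ+1)) := sq_nonneg _
        linarith
      · -- diagonal after horizontal: swap the corner cell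
        obtain ⟨hu2', hum2', hv2', hvn2'⟩ := hWP.2.2.2.1 (ℓ+2) (by omega)
        have hp2b : (p (ℓ+2)).2 = (p ℓ).2 + 1 := by rw [hs.2, hH.2]
        have hEX := exchange_facts hWP hopt hLmin hphimax (ℓ+1) 1 1
          (fun _ => ((p ℓ).1 + 1, (p ℓ).2 + 1))
          (by omega) (by omega) (by omega)
          (by
            intro i _
            have h2 : (p (ℓ+1)).1 = (p ℓ).1 + 1 := hH.1
            refine ⟨?_, ?_, ?_, ?_⟩ <;> simp only [] <;> omega)
          (fun i hi => absurd hi (by omega))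
          (by
            refine Or.inl ⟨by omega, ?_⟩
            rw [show ℓ + 1 - 1 = ℓ by omega]
            right; right; exact ⟨rfl, rfl⟩)
          (by
            show Stp ((p ℓ).1 + 1, (p ℓ).2 + 1) (p (ℓ+1+1))
            left
            constructor
            · show (p (ℓ+2)).1 = (p ℓ).1 + 1 + 1
              rw [hs.1, hH.1]
            · show (p (ℓ+2)).2 = (p ℓ).2 + 1
              exact hp2b)
        obtain ⟨f1, _, f3⟩ := hEX
        have hyeq : y ((p ℓ).2 + 1) = y (p ℓ).2 := hyc (p ℓ).2 hv1 (by omega) hB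
        have hceq : (∑ i ∈ Finset.range 1, cC x y ((fun _ => ((p ℓ).1 + 1, (p ℓ).2 + 1)) i))
            = ∑ τ ∈ Finset.Ico (ℓ+1) (ℓ+1+1), cC x y (p τ) := by
          rw [sum_Ico_one (fun τ => cC x y (p τ)), Finset.sum_range_one]
          have hp1 : p (ℓ+1) = ((p ℓ).1 + 1, (p ℓ).2) := Prod.ext hH.1 hH.2
          rw [hp1]
          show (x ((p ℓ).1 + 1) - y ((p ℓ).2 + 1))^2 = (x ((p ℓ).1 + 1) - y (p ℓ).2)^2
          rw [hyeq]
        have := f3 rfl hceq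
        rw [sum_Ico_one (fun τ => cP (p τ)), Finset.sum_range_one] at this
        have hp1 : p (ℓ+1) = ((p ℓ).1 + 1, (p ℓ).2) := Prod.ext hH.1 hH.2
        rw [hp1] at this
        simp [cP] at this

end EscH

end DTWAux

/-- There exists an optimal warping path that is diagonal-conform: every
horizontal step happens on a top boundary row `a i` of some block, every
vertical step happens on a right boundary column `b j` of some block, and every
diagonal step happens on a block diagonal, i.e. on a diagonal whose offset is
`0` (the diagonal through `(1,1)`) or `b j − a i` for some `i ∈ [k]`, `j ∈ [ℓ]`
(a diagonal through an upper-right block corner). -/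
theorem exists_optimal_diagonal_conform
    (k l m n : ℕ) (hk : 1 ≤ k) (hl : 1 ≤ l)
    (mr nr : ℕ → ℕ) (hmr : ∀ i ∈ Icc 1 k, 1 ≤ mr i) (hnr : ∀ j ∈ Icc 1 l, 1 ≤ nr j)
    (a b : ℕ → ℕ)
    (ha : ∀ i, a i = ∑ r ∈ Icc 1 i, mr r) (hb : ∀ j, b j = ∑ s ∈ Icc 1 j, nr s)
    (ham : a k = m) (hbn : b l = n)
    (x y : ℕ → ℝ) (xt yt : ℕ → ℝ)
    (hx : ∀ i, 1 ≤ i → i ≤ k → ∀ q, a (i - 1) < q → q ≤ a i → x q = xt i)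
    (hy : ∀ j, 1 ≤ j → j ≤ l → ∀ q, b (j - 1) < q → q ≤ b j → y q = yt j) :
    ∃ L p, IsWarpingPath m n L p ∧ pathCost x y L p = dtwSq x y m n ∧
      ∀ ℓ, ℓ + 1 < L →
        (((p (ℓ + 1)).1 = (p ℓ).1 ∧ (p (ℓ + 1)).2 = (p ℓ).2 + 1) →
          ∃ i ∈ Icc 1 k, (p ℓ).1 = a i) ∧
        (((p (ℓ + 1)).1 = (p ℓ).1 + 1 ∧ (p (ℓ + 1)).2 = (p ℓ).2) →
          ∃ j ∈ Icc 1 l, (p ℓ).2 = b j) ∧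
        (((p (ℓ + 1)).1 = (p ℓ).1 + 1 ∧ (p (ℓ + 1)).2 = (p ℓ).2 + 1) →
          ((p ℓ).2 : ℤ) - ((p ℓ).1 : ℤ) = 0 ∨
          ∃ i ∈ Icc 1 k, ∃ j ∈ Icc 1 l,
            ((p ℓ).2 : ℤ) - ((p ℓ).1 : ℤ) = (b j : ℤ) - (a i : ℤ)) := by
  classical
  have hm1 : 1 ≤ m := DTWAux.N_pos ha hmr hk ham
  have hn1 : 1 ≤ n := DTWAux.N_pos hb hnr hl hbn
  obtain ⟨L, p, hWP, hopt, hLmin, hphimax⟩ := DTWAux.exists_extremal x y m n hm1 hn1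
  refine ⟨L, p, hWP, hopt, ?_⟩
  have hAm : DTWAux.Aset k a m := ⟨k, hk, le_rfl, ham.symm⟩
  have hBn : DTWAux.Aset l b n := ⟨l, hl, le_rfl, hbn.symm⟩
  have hxc := DTWAux.xconst_of hk (DTWAux.arr_zero ha) ham hx
  have hyc := DTWAux.xconst_of hl (DTWAux.arr_zero hb) hbn hy
  intro ℓ hℓ
  refine ⟨?_, ?_, ?_⟩
  · intro hV
    by_contra hc
    push_neg at hc
    refine DTWAux.esc_V hAm hxc hWP hopt hLmin hphimax L ℓ (by omega) hℓ hV ?_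
    rintro ⟨i, hi1, hi2, hie⟩
    exact hc i (Finset.mem_Icc.2 ⟨hi1, hi2⟩) hie
  · intro hH
    by_contra hc
    push_neg at hc
    refine DTWAux.esc_H hBn hyc hWP hopt hLmin hphimax L ℓ (by omega) hℓ hH ?_
    rintro ⟨j, hj1, hj2, hje⟩
    exact hc j (Finset.mem_Icc.2 ⟨hj1, hj2⟩) hje
  · intro hD
    by_contra hc
    push_neg at hc
    refine DTWAux.diag_conform hAm hBn hxc hyc hWP hopt hLmin hphimax ℓ hℓ hD hc.1 ?_
    intro i hi1 hi2 j hj1 hj2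
    have := hc.2 i (Finset.mem_Icc.2 ⟨hi1, hi2⟩) j (Finset.mem_Icc.2 ⟨hj1, hj2⟩)
    exact this
end

section
/- Shifting invariance of diagonal subpath cost: let p be a warping path that moves horizontally h ≥ 1 steps on a block top boundary row a_i, then diagonally between two neighboring block diagonals L and L' (no upper-right block corner strictly between them) until it reaches another block top boundary row a_{i'} (i' > i) where it takes h' ≥ 1 horizontal steps. Let p' be the warping path obtained by shifting the diagonal subpath one unit to the right (taking h+1 horizontal steps on a_i and h'−1 on a_{i'}), and p'' the path obtained by shifting it one unit to the left. Then C(p') − C(p) = −(C(p'') − C(p)); i.e., the cost change under a unit right shift is the negative of the cost change under a unit left shift. -/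
/-- The cost of a warping path with respect to a local cost function `w`. -/
noncomputable def pathCostW (w : ℕ → ℕ → ℝ) (L : ℕ) (p : ℕ → ℕ × ℕ) : ℝ :=
  ∑ ℓ ∈ Finset.range L, w (p ℓ).1 (p ℓ).2

/-- Every `x ∈ [1, a k]` lies in some block interval `(a (i₁-1), a i₁]`. -/
lemma exists_block_interval (k : ℕ) (a : ℕ → ℕ) (ha0 : a 0 = 0)
    (x : ℕ) (hx1 : 1 ≤ x) (hxk : x ≤ a k) :
    ∃ i₁, 1 ≤ i₁ ∧ i₁ ≤ k ∧ a (i₁ - 1) < x ∧ x ≤ a i₁ := by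
  have hex : ∃ i, x ≤ a i := ⟨k, hxk⟩
  classical
  let i₁ := Nat.find hex
  have hfi : x ≤ a i₁ := Nat.find_spec hex
  have h1 : 1 ≤ i₁ := by
    by_contra h
    have : i₁ = 0 := by omega
    rw [this, ha0] at hfi; omega
  have hlk : i₁ ≤ k := Nat.find_min' hex hxk
  have hlt : a (i₁ - 1) < x := by
    have := Nat.find_min hex (show i₁ - 1 < i₁ by omega)
    omega
  exact ⟨i₁, h1, hlk, hlt, hfi⟩

/-- Shifting antisymmetry. Suppose the DTW grid is partitioned into blocks with
prefix sums `a i`, `b j` and block-constant local cost `w p q = cblock i j` for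
`(p, q)` in block `B_{i,j}`. Let `p` be a warping path that takes a horizontal
step onto row `a i`, at index `s` on row `a i` starts a diagonal subpath up to
index `t` on row `a i'`, followed by a horizontal step, and suppose that no
upper-right block corner `(a i₀, b j₀)` lies on the diagonal subpath (the
subpath runs strictly between two neighboring block diagonals). Let `p'` be
obtained from `p` by shifting the diagonal subpath one unit to the right and
`p''` by shifting it one unit to the left. Then the cost change of the right
shift is the negative of the cost change of the left shift:
`C(p') − C(p) = −(C(p'') − C(p))`. -/
theorem shift_cost_antisymm
    (m n k l : ℕ) (hk : 1 ≤ k) (hl : 1 ≤ l)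
    (a b : ℕ → ℕ) (ha0 : a 0 = 0) (hb0 : b 0 = 0)
    (hamono : ∀ i < k, a i < a (i + 1)) (hbmono : ∀ j < l, b j < b (j + 1))
    (ham : a k = m) (hbn : b l = n)
    (w : ℕ → ℕ → ℝ) (cblock : ℕ → ℕ → ℝ)
    (hw : ∀ i, 1 ≤ i → i ≤ k → ∀ j, 1 ≤ j → j ≤ l →
      ∀ p q, a (i - 1) < p → p ≤ a i → b (j - 1) < q → q ≤ b j → w p q = cblock i j)
    (L : ℕ) (p : ℕ → ℕ × ℕ) (hp : IsWarpingPath m n L p)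
    (s t : ℕ) (hs : 1 ≤ s) (hst : s < t) (htL : t + 1 < L)
    (i i' : ℕ) (hi : 1 ≤ i) (hii' : i < i') (hi'k : i' ≤ k)
    (hrow : (p s).1 = a i) (hrow' : (p t).1 = a i')
    (hhor_before : (p s).1 = (p (s - 1)).1 ∧ (p s).2 = (p (s - 1)).2 + 1)
    (hdiag : ∀ ℓ, s ≤ ℓ → ℓ < t →
      (p (ℓ + 1)).1 = (p ℓ).1 + 1 ∧ (p (ℓ + 1)).2 = (p ℓ).2 + 1)
    (hhor_after : (p (t + 1)).1 = (p t).1 ∧ (p (t + 1)).2 = (p t).2 + 1)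
    (hnocorner : ∀ ℓ, s ≤ ℓ → ℓ ≤ t →
      ¬ ∃ i₀ ∈ Finset.Icc 1 k, ∃ j₀ ∈ Finset.Icc 1 l,
          (p ℓ).1 = a i₀ ∧ (p ℓ).2 = b j₀) :
    pathCostW w L (fun ℓ => if s < ℓ ∧ ℓ ≤ t then ((p (ℓ - 1)).1, (p (ℓ - 1)).2 + 1) else p ℓ)
        - pathCostW w L p
      = -(pathCostW w L (fun ℓ => if s ≤ ℓ ∧ ℓ < t then ((p (ℓ + 1)).1, (p (ℓ + 1)).2 - 1) else p ℓ)
            - pathCostW w L p) := by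
  obtain ⟨hL1, hp0, hpL, hbound, hstep⟩ := hp
  -- the key pointwise "four corners" identity
  have key : ∀ ℓ, s ≤ ℓ → ℓ < t →
      w (p ℓ).1 ((p ℓ).2 + 1) + w ((p ℓ).1 + 1) (p ℓ).2
        = w ((p ℓ).1 + 1) ((p ℓ).2 + 1) + w (p ℓ).1 (p ℓ).2 := by
    intro ℓ hsℓ hℓt
    have hℓL : ℓ < L := by omega
    have hℓ1L : ℓ + 1 < L := by omega
    obtain ⟨hA1, hA1m, hA2, hA2n⟩ := hbound ℓ hℓL
    obtain ⟨hB1, hB1m, hB2, hB2n⟩ := hbound (ℓ + 1) hℓ1L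
    obtain ⟨hd1, hd2⟩ := hdiag ℓ hsℓ hℓt
    set A1 := (p ℓ).1 with hA1def
    set A2 := (p ℓ).2 with hA2def
    have hA1m' : A1 + 1 ≤ a k := by rw [ham]; omega
    have hA2n' : A2 + 1 ≤ b l := by rw [hbn]; omega
    obtain ⟨i₁, hi₁1, hi₁k, hi₁lt, hi₁le⟩ :=
      exists_block_interval k a ha0 (A1 + 1) (by omega) hA1m'
    obtain ⟨j₁, hj₁1, hj₁l, hj₁lt, hj₁le⟩ :=
      exists_block_interval l b hb0 (A2 + 1) (by omega) hA2n'
    by_cases h1 : a (i₁ - 1) < A1 <;> by_cases h2 : b (j₁ - 1) < A2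
    · -- all four points in block (i₁, j₁)
      have w00 := hw i₁ hi₁1 hi₁k j₁ hj₁1 hj₁l A1 A2 h1 (by omega) h2 (by omega)
      have w10 := hw i₁ hi₁1 hi₁k j₁ hj₁1 hj₁l (A1+1) A2 (by omega) hi₁le h2 (by omega)
      have w01 := hw i₁ hi₁1 hi₁k j₁ hj₁1 hj₁l A1 (A2+1) h1 (by omega) (by omega) hj₁le
      have w11 := hw i₁ hi₁1 hi₁k j₁ hj₁1 hj₁l (A1+1) (A2+1) (by omega) hi₁le (by omega) hj₁le
      rw [w00, w10, w01, w11]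
      try ring
    · -- column boundary crossed : b (j₁-1) = A2
      have hb' : b (j₁ - 1) = A2 := by omega
      have hj₁2 : 2 ≤ j₁ := by
        by_contra h
        have : j₁ = 1 := by omega
        rw [this, show (1:ℕ)-1 = 0 from rfl, hb0] at hb'; omega
      have hprev : b (j₁ - 2) < A2 := by
        have := hbmono (j₁ - 2) (by omega)
        have h' : j₁ - 2 + 1 = j₁ - 1 := by omega
        rw [h'] at this; omega
      have hj1sub : j₁ - 1 - 1 = j₁ - 2 := by omega
      have w00 := hw i₁ hi₁1 hi₁k (j₁-1) (by omega) (by omega) A1 A2 h1 (by omega)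
        (by rw [hj1sub]; exact hprev) (by omega)
      have w10 := hw i₁ hi₁1 hi₁k (j₁-1) (by omega) (by omega) (A1+1) A2 (by omega) hi₁le
        (by rw [hj1sub]; exact hprev) (by omega)
      have w01 := hw i₁ hi₁1 hi₁k j₁ hj₁1 hj₁l A1 (A2+1) h1 (by omega) (by omega) hj₁le
      have w11 := hw i₁ hi₁1 hi₁k j₁ hj₁1 hj₁l (A1+1) (A2+1) (by omega) hi₁le (by omega) hj₁le
      rw [w00, w10, w01, w11]
      try ring
    · -- row boundary crossed : a (i₁-1) = A1
      have ha' : a (i₁ - 1) = A1 := by omega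
      have hi₁2 : 2 ≤ i₁ := by
        by_contra h
        have : i₁ = 1 := by omega
        rw [this, show (1:ℕ)-1 = 0 from rfl, ha0] at ha'; omega
      have hprev : a (i₁ - 2) < A1 := by
        have := hamono (i₁ - 2) (by omega)
        have h' : i₁ - 2 + 1 = i₁ - 1 := by omega
        rw [h'] at this; omega
      have hi1sub : i₁ - 1 - 1 = i₁ - 2 := by omega
      have w00 := hw (i₁-1) (by omega) (by omega) j₁ hj₁1 hj₁l A1 A2
        (by rw [hi1sub]; exact hprev) (by omega) h2 (by omega)
      have w01 := hw (i₁-1) (by omega) (by omega) j₁ hj₁1 hj₁l A1 (A2+1)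
        (by rw [hi1sub]; exact hprev) (by omega) (by omega) hj₁le
      have w10 := hw i₁ hi₁1 hi₁k j₁ hj₁1 hj₁l (A1+1) A2 (by omega) hi₁le h2 (by omega)
      have w11 := hw i₁ hi₁1 hi₁k j₁ hj₁1 hj₁l (A1+1) (A2+1) (by omega) hi₁le (by omega) hj₁le
      rw [w00, w10, w01, w11]
      try ring
    · -- both boundaries : (p ℓ) is a corner, contradiction
      exfalso
      have ha' : a (i₁ - 1) = A1 := by omega
      have hb' : b (j₁ - 1) = A2 := by omega
      have hi₁2 : 2 ≤ i₁ := by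
        by_contra h
        have : i₁ = 1 := by omega
        rw [this, show (1:ℕ)-1 = 0 from rfl, ha0] at ha'; omega
      have hj₁2 : 2 ≤ j₁ := by
        by_contra h
        have : j₁ = 1 := by omega
        rw [this, show (1:ℕ)-1 = 0 from rfl, hb0] at hb'; omega
      exact hnocorner ℓ hsℓ (by omega)
        ⟨i₁ - 1, Finset.mem_Icc.mpr ⟨by omega, by omega⟩,
         j₁ - 1, Finset.mem_Icc.mpr ⟨by omega, by omega⟩, ha'.symm, hb'.symm⟩
  -- turn cost differences into sums over the shifted ranges
  have hsub1 : Finset.Ioc s t ⊆ Finset.range L := by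
    intro x hx
    rw [Finset.mem_Ioc] at hx
    rw [Finset.mem_range]
    omega
  have hsub2 : Finset.Ico s t ⊆ Finset.range L := by
    intro x hx
    rw [Finset.mem_Ico] at hx
    rw [Finset.mem_range]
    omega
  have e1 : pathCostW w L
        (fun ℓ => if s < ℓ ∧ ℓ ≤ t then ((p (ℓ - 1)).1, (p (ℓ - 1)).2 + 1) else p ℓ)
        - pathCostW w L p
      = ∑ ℓ ∈ Finset.Ioc s t,
          (w (p (ℓ - 1)).1 ((p (ℓ - 1)).2 + 1) - w (p ℓ).1 (p ℓ).2) := by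
    unfold pathCostW
    rw [← Finset.sum_sub_distrib]
    rw [← Finset.sum_subset hsub1 (by
      intro x _ hnx
      rw [Finset.mem_Ioc] at hnx
      have hc : ¬ (s < x ∧ x ≤ t) := by tauto
      simp only [if_neg hc, sub_self])]
    apply Finset.sum_congr rfl
    intro ℓ hℓ
    rw [Finset.mem_Ioc] at hℓ
    simp only [if_pos hℓ]
  have e2 : pathCostW w L
        (fun ℓ => if s ≤ ℓ ∧ ℓ < t then ((p (ℓ + 1)).1, (p (ℓ + 1)).2 - 1) else p ℓ)
        - pathCostW w L p
      = ∑ ℓ ∈ Finset.Ico s t,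
          (w (p (ℓ + 1)).1 ((p (ℓ + 1)).2 - 1) - w (p ℓ).1 (p ℓ).2) := by
    unfold pathCostW
    rw [← Finset.sum_sub_distrib]
    rw [← Finset.sum_subset hsub2 (by
      intro x _ hnx
      rw [Finset.mem_Ico] at hnx
      have hc : ¬ (s ≤ x ∧ x < t) := by tauto
      simp only [if_neg hc, sub_self])]
    apply Finset.sum_congr rfl
    intro ℓ hℓ
    rw [Finset.mem_Ico] at hℓ
    simp only [if_pos hℓ]
  -- reindex the second sum to Ioc
  have e3 : ∑ ℓ ∈ Finset.Ico s t,
        (w (p (ℓ + 1)).1 ((p (ℓ + 1)).2 - 1) - w (p ℓ).1 (p ℓ).2)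
      = ∑ ℓ ∈ Finset.Ioc s t,
        (w (p ℓ).1 ((p ℓ).2 - 1) - w (p (ℓ - 1)).1 (p (ℓ - 1)).2) := by
    apply Finset.sum_nbij' (fun ℓ => ℓ + 1) (fun ℓ => ℓ - 1)
    · intro x hx
      rw [Finset.mem_Ico] at hx
      rw [Finset.mem_Ioc]
      omega
    · intro x hx
      rw [Finset.mem_Ioc] at hx
      rw [Finset.mem_Ico]
      omega
    · intro x _; omega
    · intro x hx
      rw [Finset.mem_Ioc] at hx
      omega
    · intro x _
      simp only [Nat.add_sub_cancel]
  -- the combined sum vanishes termwise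
  have e4 : ∑ ℓ ∈ Finset.Ioc s t,
        ((w (p (ℓ - 1)).1 ((p (ℓ - 1)).2 + 1) - w (p ℓ).1 (p ℓ).2)
          + (w (p ℓ).1 ((p ℓ).2 - 1) - w (p (ℓ - 1)).1 (p (ℓ - 1)).2)) = 0 := by
    apply Finset.sum_eq_zero
    intro ℓ hℓ
    rw [Finset.mem_Ioc] at hℓ
    have hq : ℓ - 1 + 1 = ℓ := by omega
    obtain ⟨hd1, hd2⟩ := hdiag (ℓ - 1) (by omega) (by omega)
    rw [hq] at hd1 hd2
    have hk2 := key (ℓ - 1) (by omega) (by omega)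
    rw [hd1, hd2]
    simp only [Nat.add_sub_cancel]
    linarith
  rw [e1, e2, e3]
  rw [Finset.sum_add_distrib] at e4
  linarith [e4]
end

section
/- For time series x with k runs and y with ℓ runs, of lengths m and n respectively, the number κ of intersections between block boundaries and block diagonals satisfies κ ≤ min((k+ℓ)(kℓ+1), kn + ℓm − kℓ). -/
open Finset
open scoped Classical

lemma prefix_sum_facts (k m : ℕ) (hk : 1 ≤ k) (mr : ℕ → ℕ)
    (hmr : ∀ i ∈ Icc 1 k, 1 ≤ mr i) (a : ℕ → ℕ)
    (ha : ∀ i, a i = ∑ r ∈ Icc 1 i, mr r) (ham : a k = m) :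
    (∀ i ∈ Icc 1 k, a i ∈ Icc 1 m) ∧ Set.InjOn a (Icc 1 k) := by
  have hmono : ∀ i i', i' ≤ k → i < i' → a i < a i' := by
    intro i i' hik hii
    have hIcc : ∀ t : ℕ, Icc 1 t = Ioc 0 t := fun t => Finset.Icc_add_one_left_eq_Ioc 0 t
    have hsplit : ∑ r ∈ Ioc 0 i, mr r + ∑ r ∈ Ioc i i', mr r = ∑ r ∈ Ioc 0 i', mr r :=
      Finset.sum_Ioc_consecutive _ (Nat.zero_le i) (le_of_lt hii)
    have h2 : mr i' ≤ ∑ r ∈ Ioc i i', mr r :=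
      Finset.single_le_sum (fun r _ => Nat.zero_le _) (by simp [Finset.mem_Ioc]; omega)
    have h3 : 1 ≤ mr i' := hmr i' (by simp [Finset.mem_Icc]; omega)
    rw [ha, ha, hIcc, hIcc]
    omega
  constructor
  · intro i hi
    simp only [mem_Icc] at hi ⊢
    constructor
    · have h1 : mr 1 ≤ ∑ r ∈ Icc 1 i, mr r :=
        Finset.single_le_sum (fun r _ => Nat.zero_le _) (by simp [Finset.mem_Icc]; omega)
      have h2 : 1 ≤ mr 1 := hmr 1 (by simp [Finset.mem_Icc]; omega)
      rw [ha]; omega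
    · rcases eq_or_lt_of_le hi.2 with h | h
      · rw [h, ham]
      · exact le_of_lt (ham ▸ hmono i k le_rfl h)
  · intro i hi i' hi' hEq
    simp only [Finset.coe_Icc, Set.mem_Icc] at hi hi'
    by_contra hne
    rcases Nat.lt_or_ge i i' with h | h
    · exact absurd hEq (Nat.ne_of_lt (hmono i i' hi'.2 h))
    · have : i' < i := lt_of_le_of_ne h (Ne.symm hne)
      exact absurd hEq.symm (Nat.ne_of_lt (hmono i' i hi.2 this))

lemma row_filter_card_le (m n v : ℕ) (D : Finset ℤ) :
    ((Icc 1 m ×ˢ Icc 1 n).filter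
      (fun pq : ℕ × ℕ => pq.1 = v ∧ ((pq.2 : ℤ) - (pq.1 : ℤ)) ∈ D)).card ≤ D.card := by
  refine Finset.card_le_card_of_injOn (fun pq => (pq.2 : ℤ) - (pq.1 : ℤ)) ?_ ?_
  · intro pq hpq
    exact (mem_filter.1 hpq).2.2
  · intro pq hpq pq' hpq' hEq
    have h1 := (mem_filter.1 hpq).2.1
    have h1' := (mem_filter.1 hpq').2.1
    have hEq' : (pq.2 : ℤ) - (pq.1 : ℤ) = (pq'.2 : ℤ) - (pq'.1 : ℤ) := hEq
    have hp : pq.1 = pq'.1 := h1.trans h1'.symm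
    exact Prod.ext hp (by omega)

lemma col_filter_card_le (m n v : ℕ) (D : Finset ℤ) :
    ((Icc 1 m ×ˢ Icc 1 n).filter
      (fun pq : ℕ × ℕ => pq.2 = v ∧ ((pq.2 : ℤ) - (pq.1 : ℤ)) ∈ D)).card ≤ D.card := by
  refine Finset.card_le_card_of_injOn (fun pq => (pq.2 : ℤ) - (pq.1 : ℤ)) ?_ ?_
  · intro pq hpq
    exact (mem_filter.1 hpq).2.2
  · intro pq hpq pq' hpq' hEq
    have h1 := (mem_filter.1 hpq).2.1
    have h1' := (mem_filter.1 hpq').2.1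
    have hEq' : (pq.2 : ℤ) - (pq.1 : ℤ) = (pq'.2 : ℤ) - (pq'.1 : ℤ) := hEq
    have hq : pq.2 = pq'.2 := h1.trans h1'.symm
    exact Prod.ext (by omega) hq

/-- For `x` with `k` runs and `y` with `ℓ` runs (lengths `m` and `n`), the
number `κ` of intersections between block boundaries and block diagonals —
grid points `(p, q) ∈ [m] × [n]` lying on a boundary row `a i` or boundary
column `b j` whose diagonal offset `q − p` is a block-diagonal offset — is at
most `min((k + ℓ)(kℓ + 1), k·n + ℓ·m − k·ℓ)`. -/
theorem kappa_le (k l m n : ℕ) (hk : 1 ≤ k) (hl : 1 ≤ l)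
    (mr nr : ℕ → ℕ)
    (hmr : ∀ i ∈ Icc 1 k, 1 ≤ mr i) (hnr : ∀ j ∈ Icc 1 l, 1 ≤ nr j)
    (a b : ℕ → ℕ)
    (ha : ∀ i, a i = ∑ r ∈ Icc 1 i, mr r) (hb : ∀ j, b j = ∑ s ∈ Icc 1 j, nr s)
    (ham : a k = m) (hbn : b l = n) :
    ((Icc 1 m ×ˢ Icc 1 n).filter (fun pq : ℕ × ℕ =>
        ((∃ i ∈ Icc 1 k, pq.1 = a i) ∨ ∃ j ∈ Icc 1 l, pq.2 = b j) ∧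
        ((pq.2 : ℤ) - (pq.1 : ℤ) = 0 ∨
          ∃ i ∈ Icc 1 k, ∃ j ∈ Icc 1 l,
            (pq.2 : ℤ) - (pq.1 : ℤ) = (b j : ℤ) - (a i : ℤ)))).card
      ≤ min ((k + l) * (k * l + 1)) (k * n + l * m - k * l) := by
  obtain ⟨haMem, haInj⟩ := prefix_sum_facts k m hk mr hmr a ha ham
  obtain ⟨hbMem, hbInj⟩ := prefix_sum_facts l n hl nr hnr b hb hbn
  set S := ((Icc 1 m ×ˢ Icc 1 n).filter (fun pq : ℕ × ℕ =>
        ((∃ i ∈ Icc 1 k, pq.1 = a i) ∨ ∃ j ∈ Icc 1 l, pq.2 = b j) ∧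
        ((pq.2 : ℤ) - (pq.1 : ℤ) = 0 ∨
          ∃ i ∈ Icc 1 k, ∃ j ∈ Icc 1 l,
            (pq.2 : ℤ) - (pq.1 : ℤ) = (b j : ℤ) - (a i : ℤ)))) with hS
  refine le_min ?_ ?_
  · -- Bound 1 : (k+l)(kl+1)
    set D : Finset ℤ :=
      insert 0 (((Icc 1 k) ×ˢ (Icc 1 l)).image fun ij => (b ij.2 : ℤ) - (a ij.1 : ℤ)) with hD
    have hDcard : D.card ≤ k * l + 1 := by
      refine le_trans (card_insert_le _ _) ?_
      have h := Finset.card_image_le (s := (Icc 1 k) ×ˢ (Icc 1 l))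
        (f := fun ij : ℕ × ℕ => (b ij.2 : ℤ) - (a ij.1 : ℤ))
      simp only [Finset.card_product, Nat.card_Icc, Nat.add_sub_cancel] at h
      omega
    have hsub : S ⊆
        ((Icc 1 k).biUnion (fun i => (Icc 1 m ×ˢ Icc 1 n).filter
            (fun pq : ℕ × ℕ => pq.1 = a i ∧ ((pq.2 : ℤ) - (pq.1 : ℤ)) ∈ D))) ∪
        ((Icc 1 l).biUnion (fun j => (Icc 1 m ×ˢ Icc 1 n).filter
            (fun pq : ℕ × ℕ => pq.2 = b j ∧ ((pq.2 : ℤ) - (pq.1 : ℤ)) ∈ D))) := by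
      intro pq hpq
      simp only [hS, mem_filter] at hpq
      obtain ⟨hgrid, hbd, hdiag⟩ := hpq
      have hoff : ((pq.2 : ℤ) - (pq.1 : ℤ)) ∈ D := by
        rcases hdiag with h0 | ⟨i, hi, j, hj, hEq⟩
        · rw [h0]; exact mem_insert_self _ _
        · exact mem_insert_of_mem (mem_image.2 ⟨(i, j), mem_product.2 ⟨hi, hj⟩, hEq.symm⟩)
      rcases hbd with ⟨i, hi, hpi⟩ | ⟨j, hj, hpj⟩
      · exact mem_union_left _ (mem_biUnion.2 ⟨i, hi, mem_filter.2 ⟨hgrid, hpi, hoff⟩⟩)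
      · exact mem_union_right _ (mem_biUnion.2 ⟨j, hj, mem_filter.2 ⟨hgrid, hpj, hoff⟩⟩)
    calc S.card ≤ _ := card_le_card hsub
      _ ≤ _ + _ := card_union_le _ _
      _ ≤ (∑ i ∈ Icc 1 k, ((Icc 1 m ×ˢ Icc 1 n).filter
              (fun pq : ℕ × ℕ => pq.1 = a i ∧ ((pq.2 : ℤ) - (pq.1 : ℤ)) ∈ D)).card) +
          (∑ j ∈ Icc 1 l, ((Icc 1 m ×ˢ Icc 1 n).filter
              (fun pq : ℕ × ℕ => pq.2 = b j ∧ ((pq.2 : ℤ) - (pq.1 : ℤ)) ∈ D)).card) :=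
          Nat.add_le_add card_biUnion_le card_biUnion_le
      _ ≤ (∑ _i ∈ Icc 1 k, (k * l + 1)) + (∑ _j ∈ Icc 1 l, (k * l + 1)) :=
          Nat.add_le_add
            (Finset.sum_le_sum fun i _ => le_trans (row_filter_card_le m n (a i) D) hDcard)
            (Finset.sum_le_sum fun j _ => le_trans (col_filter_card_le m n (b j) D) hDcard)
      _ = (k + l) * (k * l + 1) := by
          simp only [Finset.sum_const, smul_eq_mul, Nat.card_Icc, Nat.add_sub_cancel]
          ring
  · -- Bound 2 : k n + l m - k l
    set A : Finset ℕ := (Icc 1 k).image a with hA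
    set Bf : Finset ℕ := (Icc 1 l).image b with hBf
    have hAcard : A.card = k := by
      rw [hA, Finset.card_image_of_injOn haInj, Nat.card_Icc]; omega
    have hBcard : Bf.card = l := by
      rw [hBf, Finset.card_image_of_injOn hbInj, Nat.card_Icc]; omega
    have hAsub : A ⊆ Icc 1 m := by
      intro x hx
      obtain ⟨i, hi, rfl⟩ := mem_image.1 hx
      exact haMem i hi
    have hBsub : Bf ⊆ Icc 1 n := by
      intro x hx
      obtain ⟨j, hj, rfl⟩ := mem_image.1 hx
      exact hbMem j hj
    have hsub : S ⊆ (A ×ˢ Icc 1 n) ∪ (Icc 1 m ×ˢ Bf) := by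
      intro pq hpq
      simp only [hS, mem_filter] at hpq
      obtain ⟨hgrid, hbd, -⟩ := hpq
      rw [mem_product] at hgrid
      rcases hbd with ⟨i, hi, hpi⟩ | ⟨j, hj, hpj⟩
      · exact mem_union_left _ (mem_product.2 ⟨mem_image.2 ⟨i, hi, hpi.symm⟩, hgrid.2⟩)
      · exact mem_union_right _ (mem_product.2 ⟨hgrid.1, mem_image.2 ⟨j, hj, hpj.symm⟩⟩)
    have hinter : (A ×ˢ Icc 1 n) ∩ (Icc 1 m ×ˢ Bf) = A ×ˢ Bf := by
      ext pq
      simp only [mem_inter, mem_product]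
      constructor
      · rintro ⟨⟨h1, h2⟩, h3, h4⟩; exact ⟨h1, h4⟩
      · rintro ⟨h1, h2⟩; exact ⟨⟨h1, hBsub h2⟩, hAsub h1, h2⟩
    have hRcard : (A ×ˢ Icc 1 n).card = k * n := by
      rw [card_product, hAcard, Nat.card_Icc, Nat.add_sub_cancel]
    have hCcard : (Icc 1 m ×ˢ Bf).card = l * m := by
      rw [card_product, hBcard, Nat.card_Icc]
      have : m + 1 - 1 = m := by omega
      rw [this, Nat.mul_comm]
    have hIcard : ((A ×ˢ Icc 1 n) ∩ (Icc 1 m ×ˢ Bf)).card = k * l := by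
      rw [hinter, card_product, hAcard, hBcard]
    have hUI := Finset.card_union_add_card_inter (A ×ˢ Icc 1 n) (Icc 1 m ×ˢ Bf)
    have h1 : S.card ≤ ((A ×ˢ Icc 1 n) ∪ (Icc 1 m ×ˢ Bf)).card := card_le_card hsub
    omega
end

section
/- Suppose x consists of k runs of length m' and y consists of ℓ runs of length n' with n' ≤ m'. Let M = lcm(m', n'). Then the number κ of grid points (p,q) ∈ [k·m']×[ℓ·n'] that lie on a block boundary (p = i·m' for some i ∈ [k] or q = j·n' for some j ∈ [ℓ]) and whose diagonal offset q−p belongs to {j·n' − i·m' : i∈[k], j∈[ℓ]} ∪ {0} satisfies κ ≤ 5·kℓ·(M/n') + C for some constant C independent of k and ℓ; in particular κ ∈ O(kℓ·M/n'). -/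
open Finset

open scoped Classical

/-- If `x` consists of `k` runs of length `m'` and `y` of `ℓ` runs of length
`n' ≤ m'` (so `a i = i·m'`, `b j = j·n'`, `m = k·m'`, `n = ℓ·n'`), then the
number `κ` of grid points on a block boundary whose diagonal offset is a
block-diagonal offset is at most `5·k·ℓ·(M/n') + C` for a constant `C`
independent of `k` and `ℓ`, where `M = lcm(m', n')`; hence `κ ∈ O(kℓ·M/n')`. -/
theorem kappa_equal_runs_le (m' n' : ℕ) (hn' : 1 ≤ n') (hle : n' ≤ m') :
    ∃ C : ℕ, ∀ k l : ℕ, 1 ≤ k → 1 ≤ l →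
      ((Icc 1 (k * m') ×ˢ Icc 1 (l * n')).filter (fun pq : ℕ × ℕ =>
          ((∃ i ∈ Icc 1 k, pq.1 = i * m') ∨ ∃ j ∈ Icc 1 l, pq.2 = j * n') ∧
          ((pq.2 : ℤ) - (pq.1 : ℤ) = 0 ∨
            ∃ i ∈ Icc 1 k, ∃ j ∈ Icc 1 l,
              (pq.2 : ℤ) - (pq.1 : ℤ) = (j * n' : ℤ) - (i * m' : ℤ)))).card
        ≤ 5 * k * l * (Nat.lcm m' n' / n') + C := by
  refine ⟨0, fun k l hk hl => ?_⟩
  set d := Nat.gcd m' n' with hd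
  have hm' : 1 ≤ m' := le_trans hn' hle
  have hdpos : 0 < d := Nat.gcd_pos_of_pos_right _ hn'
  have hdm : d ∣ m' := Nat.gcd_dvd_left _ _
  have hdn : d ∣ n' := Nat.gcd_dvd_right _ _
  set e := m' / d with he
  have hem : e * d = m' := Nat.div_mul_cancel hdm
  have hfn : n' / d * d = n' := Nat.div_mul_cancel hdn
  have hlcm : Nat.lcm m' n' / n' = e := by
    have h1 : Nat.lcm m' n' = e * n' := by
      have hg := Nat.gcd_mul_lcm m' n'
      have h2 : d * (e * n') = d * Nat.lcm m' n' := by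
        rw [hg, ← mul_assoc, mul_comm d e, hem]
      exact (Nat.eq_of_mul_eq_mul_left hdpos h2).symm
    rw [h1, Nat.mul_div_cancel _ hn']
  set A : Finset (ℕ × ℕ) :=
    ((Icc 1 k).image (· * m')) ×ˢ ((Icc 1 (l * (n' / d))).image (· * d)) with hA
  set B : Finset (ℕ × ℕ) :=
    ((Icc 1 (k * e)).image (· * d)) ×ˢ ((Icc 1 l).image (· * n')) with hB
  refine le_trans (card_le_card (?_ : _ ⊆ A ∪ B)) ?_
  · intro pq hpq
    simp only [mem_filter, mem_product, mem_Icc] at hpq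
    obtain ⟨⟨⟨hp1, hp2⟩, hq1, hq2⟩, hbound, hoff⟩ := hpq
    have hdiff : (d : ℤ) ∣ ((pq.2 : ℤ) - (pq.1 : ℤ)) := by
      rcases hoff with h | ⟨i, _, j, _, h⟩
      · rw [h]; exact dvd_zero _
      · rw [h]
        exact dvd_sub (Dvd.dvd.mul_left (Int.natCast_dvd_natCast.mpr hdn) _)
          (Dvd.dvd.mul_left (Int.natCast_dvd_natCast.mpr hdm) _)
    rcases hbound with ⟨i, hi, hpeq⟩ | ⟨j, hj, hqeq⟩
    · apply mem_union_left
      rw [hA, mem_product]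
      constructor
      · exact mem_image.mpr ⟨i, mem_Icc.mpr hi, hpeq.symm⟩
      · have hdp : d ∣ pq.1 := hpeq ▸ Dvd.dvd.mul_left hdm i
        have hdq : d ∣ pq.2 := by
          have : (d : ℤ) ∣ (pq.2 : ℤ) := by
            have := dvd_add hdiff (Int.natCast_dvd_natCast.mpr hdp)
            simpa using this
          exact_mod_cast Int.natCast_dvd_natCast.mp this
        refine mem_image.mpr ⟨pq.2 / d, mem_Icc.mpr ⟨?_, ?_⟩, Nat.div_mul_cancel hdq⟩
        · exact (Nat.one_le_div_iff hdpos).mpr (Nat.le_of_dvd (lt_of_lt_of_le one_pos hq1) hdq)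
        · have h1 : pq.2 / d * d ≤ l * (n' / d) * d := by
            rw [Nat.div_mul_cancel hdq, mul_assoc, hfn]; exact hq2
          exact Nat.le_of_mul_le_mul_right h1 hdpos
    · apply mem_union_right
      rw [hB, mem_product]
      constructor
      · have hdq : d ∣ pq.2 := hqeq ▸ Dvd.dvd.mul_left hdn j
        have hdp : d ∣ pq.1 := by
          have : (d : ℤ) ∣ (pq.1 : ℤ) := by
            have := dvd_sub (Int.natCast_dvd_natCast.mpr hdq) hdiff
            simpa using this
          exact_mod_cast Int.natCast_dvd_natCast.mp this
        refine mem_image.mpr ⟨pq.1 / d, mem_Icc.mpr ⟨?_, ?_⟩, Nat.div_mul_cancel hdp⟩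
        · exact (Nat.one_le_div_iff hdpos).mpr (Nat.le_of_dvd (lt_of_lt_of_le one_pos hp1) hdp)
        · have h1 : pq.1 / d * d ≤ k * e * d := by
            rw [Nat.div_mul_cancel hdp, mul_assoc, hem]; exact hp2
          exact Nat.le_of_mul_le_mul_right h1 hdpos
      · exact mem_image.mpr ⟨j, mem_Icc.mpr hj, hqeq.symm⟩
  have hcardA : A.card ≤ k * (l * (n' / d)) := by
    rw [hA, card_product]
    exact Nat.mul_le_mul (le_trans card_image_le (by simp))
      (le_trans card_image_le (by simp))
  have hcardB : B.card ≤ k * e * l := by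
    rw [hB, card_product]
    exact Nat.mul_le_mul (le_trans card_image_le (by simp))
      (le_trans card_image_le (by simp))
  have hfe : n' / d ≤ e := Nat.div_le_div_right hle
  · calc (A ∪ B).card ≤ A.card + B.card := card_union_le _ _
      _ ≤ k * (l * (n' / d)) + k * e * l := Nat.add_le_add hcardA hcardB
      _ ≤ k * (l * e) + k * e * l :=
          Nat.add_le_add_right (Nat.mul_le_mul_left _ (Nat.mul_le_mul_left _ hfe)) _
      _ ≤ 5 * k * l * e + 0 := by nlinarith [Nat.one_le_iff_ne_zero.mp hk]
      _ = 5 * k * l * (Nat.lcm m' n' / n') + 0 := by rw [hlcm]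
end
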